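/- arXiv:2004.02017 — 9 statements merged into one kernel-verified Lean document; each statement's English description precedes it below -/
import Mathlib

section
/- Let B be a pseudometric component of a distance space X (i.e., B is an equivalence class for the relation d_X(x,y) < ∞) and let f : X → [0,∞] satisfy f(x)+f(y) ≥ d_X(x,y) for all x,y. Then f is an extremal (minimal) such function with f finite exactly on B if and only if f[X∖B] ⊆ {∞} and f(x) = sup_{y∈B}(d_X(x,y) - f(y)) < ∞ for every x ∈ B. -/
/-!
An extremal `f ∈ Δ(X)` satisfies `f x = sup_y (d x y - f y)` at every point: otherwise lowering
`f x` to that supremum stays in `Δ(X)`. If `f = ∞` off `B`, the terms with `y ∉ B` vanish, so the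
supremum may be taken over `B`. Conversely, any `g ≤ f` in `Δ(X)` satisfies
`g x ≥ sup_{y ∈ B} (d x y - f y) = f x` on `B`, while off `B` it must be infinite because
`d x x₀ = ∞` and `g x₀ ≤ f x₀ < ∞`.
-/

open scoped ENNReal

structure DistSpace (X : Type*) where
  d : X → X → ℝ≥0∞
  refl : ∀ x, d x x = 0
  symm : ∀ x y, d x y = d y x
  triangle : ∀ x y z, d x z ≤ d x y + d y z

def Delta {X : Type*} (D : DistSpace X) : Set (X → ℝ≥0∞) :=
  {f | ∀ x y, D.d x y ≤ f x + f y}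

def Extremal {X : Type*} (D : DistSpace X) (f : X → ℝ≥0∞) : Prop :=
  f ∈ Delta D ∧ ∀ g ∈ Delta D, g ≤ f → g = f

namespace DistSpace

variable {X : Type*} (D : DistSpace X)

lemma biSup_sub_le_of_mem_Delta {f g : X → ℝ≥0∞} (hg : g ∈ Delta D) (hgf : g ≤ f)
    (S : Set X) (x : X) : ⨆ y ∈ S, D.d x y - f y ≤ g x :=
  iSup₂_le fun y _ => tsub_le_iff_right.mpr <| (hg x y).trans (add_le_add_right (hgf y) _)

lemma update_mem_Delta [DecidableEq X] {f : X → ℝ≥0∞} (hf : f ∈ Delta D) {x : X} {s : ℝ≥0∞}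
    (hs : ∀ y, D.d x y ≤ s + f y) : Function.update f x s ∈ Delta D := by
  intro a b
  by_cases ha : a = x <;> by_cases hb : b = x
  · subst ha hb
    simp [D.refl]
  · subst ha
    simpa [hb] using hs b
  · subst hb
    rw [D.symm]
    simpa [ha, add_comm] using hs a
  · simpa [ha, hb] using hf a b

variable {D} in
lemma _root_.Extremal.apply_eq_iSup {f : X → ℝ≥0∞} (hf : Extremal D f) (x : X) :
    f x = ⨆ y, D.d x y - f y := by
  classical
  set s := ⨆ y, D.d x y - f y
  have hs : ∀ y, D.d x y ≤ s + f y := fun y =>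
    tsub_le_iff_right.mp (le_iSup (fun y => D.d x y - f y) y)
  have hsf : s ≤ f x := by
    simpa only [Set.mem_univ, iSup_pos] using
      D.biSup_sub_le_of_mem_Delta hf.1 le_rfl Set.univ x
  have hle : Function.update f x s ≤ f := by
    intro a
    rcases eq_or_ne a x with rfl | ha
    · simpa using hsf
    · simp [ha]
  simpa using (congr_fun (hf.2 _ (D.update_mem_Delta hf.1 hs) hle) x).symm

lemma iSup_sub_eq_biSup {f : X → ℝ≥0∞} {B : Set X} (hf : ∀ y ∉ B, f y = ∞) (x : X) :
    ⨆ y, D.d x y - f y = ⨆ y ∈ B, D.d x y - f y := by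
  refine le_antisymm (iSup_le fun y => ?_) (iSup₂_le_iSup _ _)
  by_cases hy : y ∈ B
  · exact le_iSup₂ (f := fun y (_ : y ∈ B) => D.d x y - f y) y hy
  · simp [hf y hy]

lemma eq_top_of_d_eq_top {g : X → ℝ≥0∞} (hg : g ∈ Delta D) {x y : X} (hxy : D.d x y = ∞)
    (hy : g y ≠ ∞) : g x = ∞ := by
  have : g x + g y = ∞ := top_le_iff.mp (hxy ▸ hg x y)
  exact (ENNReal.add_eq_top.mp this).resolve_right hy

end DistSpace

/-- Characterization of the extremal functions finite exactly on a pseudometric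
component `B` of `X`: for `f ∈ ΔX`, `f` is extremal and finite exactly on `B`
iff `f` equals `∞` outside `B` and `f x = sup_{y∈B}(d x y - f y) < ∞` on `B`. -/
theorem stmt4 {X : Type*} (D : DistSpace X) (B : Set X) (x₀ : X)
    (hB : B = {y | D.d x₀ y ≠ ∞}) (f : X → ℝ≥0∞) (hf : f ∈ Delta D) :
    (Extremal D f ∧ (∀ x ∈ B, f x ≠ ∞) ∧ (∀ x ∉ B, f x = ∞)) ↔
    ((∀ x ∉ B, f x = ∞) ∧
      ∀ x ∈ B, (f x = ⨆ y ∈ B, D.d x y - f y) ∧ f x ≠ ∞) := by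
  constructor
  · rintro ⟨hext, hfin, hinf⟩
    refine ⟨hinf, fun x hx => ⟨?_, hfin x hx⟩⟩
    rw [← D.iSup_sub_eq_biSup hinf, ← hext.apply_eq_iSup]
  · rintro ⟨hinf, hsup⟩
    refine ⟨⟨hf, fun g hg hgf => funext fun x => ?_⟩, fun x hx => (hsup x hx).2, hinf⟩
    by_cases hx : x ∈ B
    · refine le_antisymm (hgf x) ?_
      rw [(hsup x hx).1]
      exact D.biSup_sub_le_of_mem_Delta hg hgf B x
    · have hx₀ : x₀ ∈ B := by simp [hB, D.refl]
      have hxx₀ : D.d x x₀ = ∞ := by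
        rw [D.symm]
        simpa [hB] using hx
      have hgx₀ : g x₀ ≠ ∞ := ne_top_of_le_ne_top (hsup x₀ hx₀).2 (hgf x₀)
      rw [hinf x hx, D.eq_top_of_d_eq_top hg hxx₀ hgx₀]
end

section
/- For any isometry i : X → Y between distance spaces and any Lipschitz function f : X → [-∞,∞] (with the extended-real distance), there exists a Lipschitz function F : Y → [-∞,∞] such that F ∘ i = f and Lip(F) = Lip(f). -/
open scoped ENNReal NNReal

/-- The distance on the extended real line `[-∞,∞]` : `|x-y|` for finite `x,y`,
`0` if `x = y`, and `∞` otherwise. -/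
noncomputable def eRealDist (a b : EReal) : ℝ≥0∞ :=
  if a = b then 0
  else if a = ⊤ ∨ a = ⊥ ∨ b = ⊤ ∨ b = ⊥ then ∞
  else ENNReal.ofReal |a.toReal - b.toReal|

/-! McShane extension: `F y = inf (f x + L d(i x, y))` over the `x` with `i x` at finite distance
from `y`, computed in `EReal`, where the `±∞`-valued classes of `f` take care of themselves.
Take `L = Lip f`. The infimum defining `Lip f` need not be attained (when `Lip f = 0`, `f` need
only be constant on finite-distance classes), but `L` always bounds `f` at finite distances, `F`
inherits that bound, and every `L' > L` then bounds `F` at all distances, so `Lip F ≤ Lip f`. -/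

lemma eRealDist_le_ofReal_iff {a b : EReal} {c : ℝ} (hc : 0 ≤ c) :
    eRealDist a b ≤ ENNReal.ofReal c ↔ a ≤ b + c ∧ b ≤ a + c := by
  induction a using EReal.rec <;> induction b using EReal.rec <;>
    simp [eRealDist, ← EReal.coe_add]
  case coe.coe a b =>
    split_ifs with hab
    · simp [hab, hc]
    · rw [ENNReal.ofReal_le_ofReal_iff hc, abs_sub_le_iff]
      constructor <;> rintro ⟨h₁, h₂⟩ <;> constructor <;> linarith

lemma ENNReal.coe_mul_eq_ofReal {L : ℝ≥0} {d : ℝ≥0∞} (hd : d ≠ ∞) :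
    (L : ℝ≥0∞) * d = ENNReal.ofReal (L * d.toReal) := by
  rw [ENNReal.ofReal_mul L.coe_nonneg, ENNReal.ofReal_coe_nnreal, ENNReal.ofReal_toReal hd]

namespace DistSpace

variable {X : Type*} (D : DistSpace X)

lemma d_ne_top_trans {x y z : X} (hxy : D.d x y ≠ ∞) (hyz : D.d y z ≠ ∞) : D.d x z ≠ ∞ :=
  ne_top_of_le_ne_top (ENNReal.add_ne_top.mpr ⟨hxy, hyz⟩) (D.triangle x y z)

lemma toReal_triangle {x y z : X} (hxy : D.d x y ≠ ∞) (hyz : D.d y z ≠ ∞) :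
    (D.d x z).toReal ≤ (D.d x y).toReal + (D.d y z).toReal := by
  rw [← ENNReal.toReal_add hxy hyz]
  exact ENNReal.toReal_mono (ENNReal.add_ne_top.mpr ⟨hxy, hyz⟩) (D.triangle x y z)

end DistSpace

section Extension

variable {X Y : Type*}

def FiniteLipschitzWith (D : DistSpace X) (L : ℝ≥0) (f : X → EReal) : Prop :=
  ∀ x y, D.d x y ≠ ∞ → eRealDist (f x) (f y) ≤ L * D.d x y

noncomputable def lipschitzConstant (D : DistSpace X) (f : X → EReal) : ℝ≥0∞ :=
  sInf {L | ∀ x y, eRealDist (f x) (f y) ≤ L * D.d x y}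

section FiniteLipschitzWith

variable {D : DistSpace X} {L : ℝ≥0} {f : X → EReal}

lemma finiteLipschitzWith_iff_le_add :
    FiniteLipschitzWith D L f ↔
      ∀ x y, D.d x y ≠ ∞ → f x ≤ f y + ((L * (D.d x y).toReal : ℝ) : EReal) := by
  have hc : ∀ x y, (0 : ℝ) ≤ L * (D.d x y).toReal := fun _ _ => by positivity
  refine ⟨fun h x y hxy => ?_, fun h x y hxy => ?_⟩
  · have := h x y hxy
    rw [ENNReal.coe_mul_eq_ofReal hxy, eRealDist_le_ofReal_iff (hc x y)] at this
    exact this.1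
  · rw [ENNReal.coe_mul_eq_ofReal hxy, eRealDist_le_ofReal_iff (hc x y)]
    refine ⟨h x y hxy, ?_⟩
    rw [D.symm x y] at hxy ⊢
    exact h y x hxy

lemma FiniteLipschitzWith.le_mul (h : FiniteLipschitzWith D L f) {L' : ℝ≥0∞}
    (hL : (L : ℝ≥0∞) ≤ L') (hL' : L' ≠ 0) (x y : X) :
    eRealDist (f x) (f y) ≤ L' * D.d x y := by
  by_cases hxy : D.d x y = ∞
  · simp [hxy, ENNReal.mul_top hL']
  · exact (h x y hxy).trans (mul_le_mul_left hL _)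

lemma FiniteLipschitzWith.lipschitzConstant_le (h : FiniteLipschitzWith D L f) :
    lipschitzConstant D f ≤ L :=
  le_of_forall_gt_imp_ge_of_dense fun _ hL' =>
    sInf_le (h.le_mul hL'.le (ne_bot_of_gt hL'))

lemma lipschitzConstant_ne_top {L₀ : ℝ≥0}
    (hL₀ : ∀ x y, eRealDist (f x) (f y) ≤ L₀ * D.d x y) : lipschitzConstant D f ≠ ∞ :=
  ne_top_of_le_ne_top ENNReal.coe_ne_top (sInf_le hL₀)

lemma finiteLipschitzWith_lipschitzConstant {L₀ : ℝ≥0}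
    (hL₀ : ∀ x y, eRealDist (f x) (f y) ≤ L₀ * D.d x y) :
    FiniteLipschitzWith D (lipschitzConstant D f).toNNReal f := by
  intro x y hxy
  rw [ENNReal.coe_toNNReal (lipschitzConstant_ne_top hL₀)]
  by_cases hxy₀ : D.d x y = 0
  · simpa [hxy₀] using hL₀ x y
  · rw [← ENNReal.div_le_iff hxy₀ hxy]
    exact le_sInf fun L' hL' => (ENNReal.div_le_iff hxy₀ hxy).mpr (hL' x y)

end FiniteLipschitzWith

lemma lipschitzConstant_le_of_isometry {DX : DistSpace X} {DY : DistSpace Y} {i : X → Y}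
    (hi : ∀ a b, DY.d (i a) (i b) = DX.d a b) {f : X → EReal} {F : Y → EReal}
    (hF : ∀ x, F (i x) = f x) : lipschitzConstant DX f ≤ lipschitzConstant DY F :=
  sInf_le_sInf fun L hL x y => by simpa only [hF, hi] using hL (i x) (i y)

section McShane

variable (DY : DistSpace Y) (i : X → Y) (f : X → EReal) (L : ℝ≥0)

noncomputable def mcShaneExtension (y : Y) : EReal :=
  ⨅ (x) (_ : DY.d (i x) y ≠ ∞), f x + (((L : ℝ) * (DY.d (i x) y).toReal : ℝ) : EReal)

variable {DY i f L}

lemma mcShaneExtension_le {x : X} {y : Y} (hxy : DY.d (i x) y ≠ ∞) :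
    mcShaneExtension DY i f L y ≤ f x + (((L : ℝ) * (DY.d (i x) y).toReal : ℝ) : EReal) :=
  iInf₂_le x hxy

lemma mcShaneExtension_le_add {z w : Y} (hzw : DY.d z w ≠ ∞) :
    mcShaneExtension DY i f L z ≤
      mcShaneExtension DY i f L w + (((L : ℝ) * (DY.d z w).toReal : ℝ) : EReal) := by
  rw [← EReal.sub_le_iff_le_add (.inl (EReal.coe_ne_bot _)) (.inl (EReal.coe_ne_top _))]
  refine le_iInf₂ fun x hxw => ?_
  have hwz : DY.d w z ≠ ∞ := DY.symm z w ▸ hzw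
  have hxz : DY.d (i x) z ≠ ∞ := DY.d_ne_top_trans hxw hwz
  have htri : (L : ℝ) * (DY.d (i x) z).toReal ≤
      (L : ℝ) * (DY.d (i x) w).toReal + (L : ℝ) * (DY.d z w).toReal := by
    rw [← mul_add, DY.symm z w]
    exact mul_le_mul_of_nonneg_left (DY.toReal_triangle hxw hwz) L.coe_nonneg
  rw [EReal.sub_le_iff_le_add (.inl (EReal.coe_ne_bot _)) (.inl (EReal.coe_ne_top _)), add_assoc,
    ← EReal.coe_add]
  exact (mcShaneExtension_le hxz).trans (add_le_add_right (EReal.coe_le_coe_iff.mpr htri) _)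

lemma finiteLipschitzWith_mcShaneExtension :
    FiniteLipschitzWith DY L (mcShaneExtension DY i f L) :=
  finiteLipschitzWith_iff_le_add.mpr fun _ _ => mcShaneExtension_le_add

lemma mcShaneExtension_apply_of_isometry {DX : DistSpace X}
    (hi : ∀ a b, DY.d (i a) (i b) = DX.d a b) (hf : FiniteLipschitzWith DX L f) (x : X) :
    mcShaneExtension DY i f L (i x) = f x := by
  refine le_antisymm ?_ (le_iInf₂ fun x' hx' => ?_)
  · have hxx : DY.d (i x) (i x) ≠ ∞ := by simp [hi, DX.refl]
    simpa [hi, DX.refl] using mcShaneExtension_le (f := f) (L := L) hxx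
  · rw [hi, DX.symm] at hx' ⊢
    exact finiteLipschitzWith_iff_le_add.mp hf x x' hx'

end McShane

end Extension

/-- For any isometry `i : X → Y` between distance spaces and any Lipschitz
`f : X → [-∞,∞]`, there is a Lipschitz `F : Y → [-∞,∞]` with `F ∘ i = f` and
`Lip(F) = Lip(f)`. -/
theorem stmt6 {X Y : Type*} (DX : DistSpace X) (DY : DistSpace Y)
    (i : X → Y) (hi : ∀ a b, DY.d (i a) (i b) = DX.d a b)
    (f : X → EReal)
    (hf : ∃ L : ℝ≥0, ∀ x y, eRealDist (f x) (f y) ≤ (L : ℝ≥0∞) * DX.d x y) :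
    ∃ F : Y → EReal, (∀ x, F (i x) = f x) ∧
      (∃ L : ℝ≥0, ∀ z w, eRealDist (F z) (F w) ≤ (L : ℝ≥0∞) * DY.d z w) ∧
      sInf {L : ℝ≥0∞ | ∀ z w, eRealDist (F z) (F w) ≤ L * DY.d z w} =
        sInf {L : ℝ≥0∞ | ∀ x y, eRealDist (f x) (f y) ≤ L * DX.d x y} := by
  obtain ⟨L₀, hL₀⟩ := hf
  set L := (lipschitzConstant DX f).toNNReal
  have hfL : FiniteLipschitzWith DX L f := finiteLipschitzWith_lipschitzConstant hL₀
  have hFL : FiniteLipschitzWith DY L (mcShaneExtension DY i f L) :=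
    finiteLipschitzWith_mcShaneExtension
  have hF := mcShaneExtension_apply_of_isometry hi hfL
  refine ⟨mcShaneExtension DY i f L, hF, ⟨L + 1, hFL.le_mul (by simp) (by simp)⟩, ?_⟩
  refine le_antisymm ?_ (lipschitzConstant_le_of_isometry hi hF)
  calc lipschitzConstant DY (mcShaneExtension DY i f L) ≤ L := hFL.lipschitzConstant_le
    _ = lipschitzConstant DX f := ENNReal.coe_toNNReal (lipschitzConstant_ne_top hL₀)
end

section
/- Every sequence (x_n)_{n∈ℕ} in a distance space (X,d_X) contains a subsequence which is either Cauchy or ε-separated for some ε > 0 (i.e., all pairwise distances of distinct terms are at least ε). -/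
open scoped ENNReal

/-!
Fix `ε > 0` and an infinite set `S` of indices. A maximal `ε`-separated subset `M` of `S` is either
infinite, which gives an `ε`-separated subsequence, or finite; in the latter case every index of `S`
is `ε`-close to `M`, so by pigeonhole infinitely many of them are `ε`-close to one point and hence
pairwise `2ε`-close. If no separated subsequence exists, iterating this with `ε = 2⁻ⁿ` gives nested
infinite index sets of diameter `< 2⁻ⁿ`, and a diagonal choice from them is Cauchy.
-/

open Filter Set

theorem Set.exists_maximal_pairwise_subset {α : Type*} (r : α → α → Prop) (S : Set α) :
    ∃ M, Maximal (fun M => M ⊆ S ∧ M.Pairwise r) M :=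
  zorn_subset _ fun c hcS hc =>
    ⟨⋃₀ c, ⟨sUnion_subset fun _ hs => (hcS hs).1, hc.pairwise_sUnion.2 fun _ hs => (hcS hs).2⟩,
      fun _ => subset_sUnion_of_mem⟩

theorem Set.Infinite.exists_infinite_of_finite_cover {α β : Type*} {S : Set α} (hS : S.Infinite)
    {M : Set β} (hM : M.Finite) (R : α → β → Prop) (hcover : ∀ s ∈ S, ∃ m ∈ M, R s m) :
    ∃ m ∈ M, {s ∈ S | R s m}.Infinite := by
  by_contra! hfin
  refine hS ((hM.biUnion hfin).subset fun s hs => ?_)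
  obtain ⟨m, hm, hsm⟩ := hcover s hs
  exact mem_biUnion hm ⟨hs, hsm⟩

theorem Set.Pairwise.exists_strictMono_of_infinite {r : ℕ → ℕ → Prop} {S : Set ℕ}
    (h : S.Pairwise r) (hS : S.Infinite) :
    ∃ φ : ℕ → ℕ, StrictMono φ ∧ ∀ i j, i ≠ j → r (φ i) (φ j) := by
  obtain ⟨φ, hφ, hφS⟩ := extraction_of_frequently_atTop (Nat.frequently_atTop_iff_infinite.2 hS)
  exact ⟨φ, hφ, fun i j hij => h (hφS i) (hφS j) (hφ.injective.ne hij)⟩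

theorem Set.exists_antitone_infinite_of_forall_exists_subset {α : Type*} [Infinite α] {P : ℕ → Set α → Prop}
    (h : ∀ n (S : Set α), S.Infinite → ∃ T ⊆ S, T.Infinite ∧ P n T) :
    ∃ S : ℕ → Set α, Antitone S ∧ (∀ n, (S n).Infinite) ∧ ∀ n, P n (S n) := by
  choose T hTS hT hPT using h
  let S : ℕ → {S : Set α // S.Infinite} := fun n =>
    Nat.rec ⟨T 0 univ infinite_univ, hT _ _ _⟩ (fun n S => ⟨T (n + 1) S.1 S.2, hT _ _ _⟩) n
  refine ⟨fun n => (S n).1, antitone_nat_of_succ_le fun n => hTS _ _ _, fun n => (S n).2, ?_⟩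
  rintro (_ | n) <;> exact hPT _ _ _

namespace DistSpace

variable {X : Type*} (D : DistSpace X)

theorem exists_infinite_separated_or_close {ι : Type*} (x : ι → X) {S : Set ι} (hS : S.Infinite)
    {ε : ℝ≥0∞} (hε : 0 < ε) :
    (∃ T ⊆ S, T.Infinite ∧ T.Pairwise fun i j => ε ≤ D.d (x i) (x j)) ∨
      ∃ T ⊆ S, T.Infinite ∧ ∀ i ∈ T, ∀ j ∈ T, D.d (x i) (x j) < 2 * ε := by
  obtain ⟨M, hM⟩ := exists_maximal_pairwise_subset (fun i j => ε ≤ D.d (x i) (x j)) S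
  by_cases hMinf : M.Infinite
  · exact Or.inl ⟨M, hM.prop.1, hMinf, hM.prop.2⟩
  have hcover : ∀ s ∈ S, ∃ m ∈ M, D.d (x s) (x m) < ε := by
    intro s hs
    by_contra! hfar
    have hsM : s ∈ M := hM.mem_of_prop_insert ⟨insert_subset hs hM.prop.1,
      pairwise_insert.2 ⟨hM.prop.2, fun m hm _ => ⟨hfar m hm, D.symm (x s) (x m) ▸ hfar m hm⟩⟩⟩
    exact (hfar s hsM).not_gt (by rwa [D.refl])
  obtain ⟨m, hm, hnear⟩ := hS.exists_infinite_of_finite_cover (not_infinite.1 hMinf) _ hcover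
  refine Or.inr ⟨_, sep_subset _ _, hnear, ?_⟩
  rintro i ⟨-, hi⟩ j ⟨-, hj⟩
  calc D.d (x i) (x j) ≤ D.d (x i) (x m) + D.d (x m) (x j) := D.triangle _ _ _
    _ < ε + ε := ENNReal.add_lt_add hi (D.symm (x j) (x m) ▸ hj)
    _ = 2 * ε := (two_mul ε).symm

theorem forall_exists_infinite_close_of_not_separated {ι : Type*} (x : ι → X)
    (hsep : ∀ ε, 0 < ε → ε ≠ ∞ → ∀ S : Set ι, S.Infinite →
      ¬ S.Pairwise fun i j => ε ≤ D.d (x i) (x j))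
    (ε : ℝ≥0∞) (hε : 0 < ε) (hεt : ε ≠ ∞) (S : Set ι) (hS : S.Infinite) :
    ∃ T ⊆ S, T.Infinite ∧ ∀ i ∈ T, ∀ j ∈ T, D.d (x i) (x j) < ε := by
  have hε2 : 0 < ε / 2 := ENNReal.half_pos hε.ne'
  rcases D.exists_infinite_separated_or_close x hS hε2 with ⟨T, -, hT, hTsep⟩ | hclose
  · exact absurd hTsep (hsep _ hε2 (ENNReal.div_ne_top hεt two_ne_zero) T hT)
  · rwa [ENNReal.mul_div_cancel two_ne_zero ENNReal.ofNat_ne_top] at hclose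

theorem exists_strictMono_cauchy_of_forall_exists_infinite_close (x : ℕ → X)
    (hclose : ∀ ε, 0 < ε → ε ≠ ∞ → ∀ S : Set ℕ, S.Infinite →
      ∃ T ⊆ S, T.Infinite ∧ ∀ i ∈ T, ∀ j ∈ T, D.d (x i) (x j) < ε) :
    ∃ φ : ℕ → ℕ, StrictMono φ ∧
      ∀ ε : ℝ≥0∞, 0 < ε → ∃ N, ∀ m ≥ N, ∀ k ≥ N, D.d (x (φ m)) (x (φ k)) < ε := by
  obtain ⟨S, hSanti, hSinf, hSclose⟩ := exists_antitone_infinite_of_forall_exists_subset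
    fun n => hclose (2⁻¹ ^ n) (ENNReal.pow_pos (by simp) n) (ENNReal.pow_ne_top (by simp))
  obtain ⟨φ, hφ, hφS⟩ := extraction_forall_of_frequently
    fun n => Nat.frequently_atTop_iff_infinite.2 (hSinf n)
  refine ⟨φ, hφ, fun ε hε => ?_⟩
  obtain ⟨N, hN⟩ := ENNReal.exists_inv_two_pow_lt hε.ne'
  exact ⟨N, fun m hm k hk =>
    (hSclose N _ (hSanti hm (hφS m)) _ (hSanti hk (hφS k))).trans hN⟩

end DistSpace

/-- Every sequence in a distance space contains a subsequence which is either
Cauchy or `ε`-separated for some `ε ∈ (0,∞)`. -/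
theorem stmt11 {X : Type*} (D : DistSpace X) (x : ℕ → X) :
    ∃ φ : ℕ → ℕ, StrictMono φ ∧
      ((∀ ε : ℝ≥0∞, 0 < ε → ε ≠ ∞ →
          ∃ N, ∀ m ≥ N, ∀ k ≥ N, D.d (x (φ m)) (x (φ k)) < ε) ∨
       (∃ ε : ℝ≥0∞, 0 < ε ∧ ε ≠ ∞ ∧
          ∀ i j, i ≠ j → ε ≤ D.d (x (φ i)) (x (φ j)))) := by
  by_cases hsep : ∃ ε, 0 < ε ∧ ε ≠ ∞ ∧ ∃ S : Set ℕ, S.Infinite ∧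
      S.Pairwise fun i j => ε ≤ D.d (x i) (x j)
  · obtain ⟨ε, hε, hεt, S, hS, hSsep⟩ := hsep
    obtain ⟨φ, hφ, hφsep⟩ := hSsep.exists_strictMono_of_infinite hS
    exact ⟨φ, hφ, Or.inr ⟨ε, hε, hεt, hφsep⟩⟩
  push Not at hsep
  obtain ⟨φ, hφ, hcauchy⟩ := D.exists_strictMono_cauchy_of_forall_exists_infinite_close x
    (D.forall_exists_infinite_close_of_not_separated x hsep)
  exact ⟨φ, hφ, Or.inl fun ε hε _ => hcauchy ε hε⟩
end

section
/- Let k ≤ m be nonzero finite cardinals, ε > 0, and 𝒰 = ⋃_{i<m} 𝒰_i a cover of a distance space X such that each family 𝒰_i has minimal inter-set distance at least ε, and for every k-element subset S ⊆ {0,…,m−1}, the union ⋃_{i∈S} ⋃𝒰_i equals X. Then there exists a cover 𝒱 = ⋃_{i<m+1} 𝒱_i of X such that: (1) each 𝒱_i has minimal inter-set distance at least ε/3; (2) mesh(𝒱) ≤ mesh(𝒰) + 2ε/3; (3) X = ⋃_{i∈S} ⋃𝒱_i for every k-element subset S ⊆ {0,…,m}. -/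
open scoped ENNReal

/-- `dist(A,B) = inf({∞} ∪ {d a b : a ∈ A, b ∈ B})`. -/
noncomputable def setDist {X : Type*} (D : DistSpace X) (A B : Set X) : ℝ≥0∞ :=
  ⨅ a ∈ A, ⨅ b ∈ B, D.d a b

/-- The diameter of a subset (`0` for the empty set). -/
noncomputable def ediam {X : Type*} (D : DistSpace X) (A : Set X) : ℝ≥0∞ :=
  ⨆ x ∈ A, ⨆ y ∈ A, D.d x y

/-- `mesh(𝒰)` : the supremum of the diameters of the members of `𝒰`. -/
noncomputable def mesh {X : Type*} (D : DistSpace X) (𝒰 : Set (Set X)) : ℝ≥0∞ :=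
  ⨆ U ∈ 𝒰, ediam D U

/-- The minimal inter-set distance of a family of sets. -/
noncomputable def sep {X : Type*} (D : DistSpace X) (𝒰 : Set (Set X)) : ℝ≥0∞ :=
  ⨅ U ∈ 𝒰, ⨅ V ∈ 𝒰, ⨅ _ : U ≠ V, setDist D U V

/-! Put `t = ε / 3` and replace each member of each `𝒰 i` by its open `t`-neighborhood: these
families are still `t`-separated, and diameters grow by at most `2t`. By the covering
hypothesis every point lies in `⋃₀ 𝒰 i` for at least `m - k + 1` colors `i`. The extra family
consists of the points `x` for which every color whose thickened family contains `x` already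
contains `x`, split into cells according to this set `c` of colors and to the members of the
`𝒰 i`, `i ∈ c`, containing `x`. Cells with different color sets are `t`-apart, cells with the
same color set are `ε`-apart, and each cell lies in a member of some `𝒰 i`. A point outside
all cells lies in at least `m - k + 2` of the thickened families, hence in one of any `k - 1`
of them. -/

section Kolmogorov

open Finset

variable {X : Type*} (D : DistSpace X)

lemma le_sep_iff {𝒜 : Set (Set X)} {r : ℝ≥0∞} :
    r ≤ sep D 𝒜 ↔ ∀ U ∈ 𝒜, ∀ V ∈ 𝒜, U ≠ V → ∀ a ∈ U, ∀ b ∈ V, r ≤ D.d a b := by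
  simp only [sep, setDist, le_iInf_iff]

lemma ediam_le_iff {A : Set X} {c : ℝ≥0∞} :
    ediam D A ≤ c ↔ ∀ x ∈ A, ∀ y ∈ A, D.d x y ≤ c := by
  simp only [ediam, iSup_le_iff]

lemma d_le_ediam {A : Set X} {x y : X} (hx : x ∈ A) (hy : y ∈ A) : D.d x y ≤ ediam D A :=
  (ediam_le_iff D).1 le_rfl x hx y hy

lemma mesh_le_iff {𝒜 : Set (Set X)} {c : ℝ≥0∞} :
    mesh D 𝒜 ≤ c ↔ ∀ A ∈ 𝒜, ediam D A ≤ c := by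
  simp only [mesh, iSup_le_iff]

lemma ediam_le_mesh {𝒜 : Set (Set X)} {A : Set X} (h : A ∈ 𝒜) : ediam D A ≤ mesh D 𝒜 :=
  (mesh_le_iff D).1 le_rfl A h

lemma mesh_union (𝒜 ℬ : Set (Set X)) : mesh D (𝒜 ∪ ℬ) = max (mesh D 𝒜) (mesh D ℬ) :=
  iSup_union

namespace DistSpace

def thickening (t : ℝ≥0∞) (U : Set X) : Set X := {y | ∃ u ∈ U, D.d u y < t}

variable {D}

lemma subset_thickening {t : ℝ≥0∞} (ht : 0 < t) (U : Set X) : U ⊆ D.thickening t U :=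
  fun x hx => ⟨x, hx, by rwa [D.refl]⟩

lemma sUnion_subset_sUnion_image_thickening {t : ℝ≥0∞} (ht : 0 < t) (𝒜 : Set (Set X)) :
    ⋃₀ 𝒜 ⊆ ⋃₀ (D.thickening t '' 𝒜) :=
  Set.sUnion_mono_subsets fun U => subset_thickening ht U

lemma ediam_thickening_le (t : ℝ≥0∞) (U : Set X) :
    ediam D (D.thickening t U) ≤ ediam D U + 2 * t := by
  refine (ediam_le_iff D).2 ?_
  rintro x ⟨u, hu, hux⟩ y ⟨v, hv, hvy⟩
  calc D.d x y ≤ D.d u x + D.d u v + D.d v y := by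
        rw [D.symm u x]; exact (D.triangle x v y).trans (by gcongr; exact D.triangle x u v)
    _ ≤ t + ediam D U + t := add_le_add (add_le_add hux.le (d_le_ediam D hu hv)) hvy.le
    _ = ediam D U + 2 * t := by ring

lemma mesh_image_thickening_le (t : ℝ≥0∞) (𝒜 : Set (Set X)) :
    mesh D (D.thickening t '' 𝒜) ≤ mesh D 𝒜 + 2 * t := by
  refine (mesh_le_iff D).2 ?_
  rintro _ ⟨U, hU, rfl⟩
  exact (ediam_thickening_le t U).trans (by gcongr; exact ediam_le_mesh D hU)

lemma le_sep_image_thickening {t r : ℝ≥0∞} {𝒜 : Set (Set X)} (h : t + r + t ≤ sep D 𝒜) :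
    r ≤ sep D (D.thickening t '' 𝒜) := by
  refine (le_sep_iff D).2 ?_
  rintro _ ⟨U, hU, rfl⟩ _ ⟨V, hV, rfl⟩ hne x ⟨u, hu, hux⟩ y ⟨v, hv, hvy⟩
  by_contra! hxy
  have huv : U ≠ V := by rintro rfl; exact hne rfl
  have := calc D.d u v ≤ D.d u x + D.d x y + D.d v y := by
                rw [D.symm v y]; exact (D.triangle u y v).trans (by gcongr; exact D.triangle u x y)
    _ < t + r + t := ENNReal.add_lt_add (ENNReal.add_lt_add hux hxy) hvy
    _ ≤ D.d u v := h.trans ((le_sep_iff D).1 le_rfl U hU V hV huv u hu v hv)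
  exact this.false

end DistSpace

lemma Fintype.card_lt_card_add_of_forall_inter_nonempty {ι : Type*} [Fintype ι] [DecidableEq ι]
    {A : Finset ι} {k : ℕ} (h : ∀ S : Finset ι, #S = k → (S ∩ A).Nonempty) :
    Fintype.card ι < #A + k := by
  by_contra! hle
  obtain ⟨S, hSA, hS⟩ := exists_subset_card_eq (s := Aᶜ) (n := k) (by rw [card_compl]; omega)
  obtain ⟨i, hi⟩ := h S hS
  exact mem_compl.1 (hSA (mem_inter.1 hi).1) (mem_inter.1 hi).2

lemma Fin.iUnion_eq_univ_of_forall_card_eq {α : Type*} {m k : ℕ} (F : Fin (m + 1) → Set α)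
    (h₁ : ∀ T : Finset (Fin m), #T = k → ⋃ i ∈ T, F i.castSucc = Set.univ)
    (h₂ : ∀ T : Finset (Fin m), #T + 1 = k →
      (⋃ i ∈ T, F i.castSucc) ∪ F (Fin.last m) = Set.univ)
    (S : Finset (Fin (m + 1))) (hS : #S = k) : ⋃ i ∈ S, F i = Set.univ := by
  set T : Finset (Fin m) := {j | j.castSucc ∈ S}
  have hT : #T = #(S.erase (Fin.last m)) := by
    rw [← card_map Fin.castSuccEmb]
    congr 1
    ext i
    cases i using Fin.lastCases <;> simp [T]
  have hsub : ⋃ i ∈ T, F i.castSucc ⊆ ⋃ i ∈ S, F i :=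
    Set.iUnion₂_subset fun j hj => Set.subset_biUnion_of_mem (u := F) (by simpa [T] using hj)
  refine Set.eq_univ_of_univ_subset ?_
  by_cases hlast : Fin.last m ∈ S
  · rw [← h₂ T (by rw [hT, card_erase_add_one hlast, hS])]
    exact Set.union_subset hsub (Set.subset_biUnion_of_mem hlast)
  · rw [← h₁ T (by rw [hT, erase_eq_of_notMem hlast, hS])]
    exact hsub

section Cells

variable {D} {ι : Type*} [Fintype ι]

open Classical in
noncomputable def colorsAt (𝒰 : ι → Set (Set X)) (x : X) : Finset ι := {i | x ∈ ⋃₀ 𝒰 i}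

lemma mem_colorsAt {𝒰 : ι → Set (Set X)} {x : X} {i : ι} : i ∈ colorsAt 𝒰 x ↔ x ∈ ⋃₀ 𝒰 i := by
  simp [colorsAt]

lemma colorsAt_subset_colorsAt_thickening {t : ℝ≥0∞} (ht : 0 < t) (𝒰 : ι → Set (Set X))
    (x : X) : colorsAt 𝒰 x ⊆ colorsAt (fun i => D.thickening t '' 𝒰 i) x := by
  intro i hi
  exact mem_colorsAt.2 (DistSpace.sUnion_subset_sUnion_image_thickening ht _ (mem_colorsAt.1 hi))

def cell (D : DistSpace X) (t : ℝ≥0∞) (𝒰 : ι → Set (Set X)) (c : Finset ι) (τ : ι → Set X) :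
    Set X :=
  {x | colorsAt (fun i => D.thickening t '' 𝒰 i) x = c ∧ ∀ i ∈ c, x ∈ τ i}

def cells (D : DistSpace X) (t : ℝ≥0∞) (𝒰 : ι → Set (Set X)) : Set (Set X) :=
  {V | ∃ c τ, (∀ i ∈ c, τ i ∈ 𝒰 i) ∧ V = cell D t 𝒰 c τ}

variable {t : ℝ≥0∞} {𝒰 : ι → Set (Set X)}

lemma le_d_of_mem_cell_of_not_subset {c c' : Finset ι} {τ τ' : ι → Set X}
    (hτ : ∀ i ∈ c, τ i ∈ 𝒰 i) {x y : X} (hx : x ∈ cell D t 𝒰 c τ) (hy : y ∈ cell D t 𝒰 c' τ')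
    (hcc' : ¬ c ⊆ c') : t ≤ D.d x y := by
  obtain ⟨j, hjc, hjc'⟩ := Finset.not_subset.1 hcc'
  by_contra! hxy
  rw [← hy.1, mem_colorsAt] at hjc'
  exact hjc' ⟨_, Set.mem_image_of_mem _ (hτ j hjc), x, hx.2 j hjc, hxy⟩

lemma le_sep_cells (hsep : ∀ i, t ≤ sep D (𝒰 i)) : t ≤ sep D (cells D t 𝒰) := by
  refine (le_sep_iff D).2 ?_
  rintro _ ⟨c, τ, hτ, rfl⟩ _ ⟨c', τ', hτ', rfl⟩ hne x hx y hy
  by_cases hcc' : c = c'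
  · subst hcc'
    obtain ⟨j, hj, hττ'⟩ : ∃ j ∈ c, τ j ≠ τ' j := by
      by_contra! h
      refine hne (Set.ext fun z => and_congr_right fun _ => ?_)
      exact forall₂_congr fun i hi => by rw [h i hi]
    exact (le_sep_iff D).1 (hsep j) _ (hτ j hj) _ (hτ' j hj) hττ' x (hx.2 j hj) y (hy.2 j hj)
  · rcases not_and_or.1 (mt Finset.Subset.antisymm_iff.2 hcc') with h | h
    · exact le_d_of_mem_cell_of_not_subset hτ hx hy h
    · exact D.symm x y ▸ le_d_of_mem_cell_of_not_subset hτ' hy hx h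

lemma mesh_cells_le (hne : ∀ x, (colorsAt (fun i => D.thickening t '' 𝒰 i) x).Nonempty) :
    mesh D (cells D t 𝒰) ≤ mesh D (⋃ i, 𝒰 i) := by
  refine (mesh_le_iff D).2 ?_
  rintro _ ⟨c, τ, hτ, rfl⟩
  refine (ediam_le_iff D).2 fun x hx y hy => ?_
  obtain ⟨i, hi⟩ := hx.1 ▸ hne x
  exact (d_le_ediam D (hx.2 i hi) (hy.2 i hi)).trans
    (ediam_le_mesh D (Set.mem_iUnion.2 ⟨i, hτ i hi⟩))

lemma mem_sUnion_cells {x : X}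
    (hx : colorsAt (fun i => D.thickening t '' 𝒰 i) x ⊆ colorsAt 𝒰 x) :
    x ∈ ⋃₀ cells D t 𝒰 := by
  set c := colorsAt (fun i => D.thickening t '' 𝒰 i) x
  have : ∀ i, ∃ U, i ∈ c → U ∈ 𝒰 i ∧ x ∈ U := fun i => by
    by_cases hi : i ∈ c
    · obtain ⟨U, hU, hxU⟩ := (mem_colorsAt (𝒰 := 𝒰)).1 (hx hi)
      exact ⟨U, fun _ => ⟨hU, hxU⟩⟩
    · exact ⟨∅, fun h => absurd h hi⟩
  choose τ hτ using this
  exact ⟨_, ⟨c, τ, fun i hi => (hτ i hi).1, rfl⟩, rfl, fun i hi => (hτ i hi).2⟩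

lemma lt_card_colorsAt_add {k : ℕ}
    (hcov : ∀ S : Finset ι, #S = k → ⋃ i ∈ S, ⋃₀ 𝒰 i = Set.univ) (x : X) :
    Fintype.card ι < #(colorsAt 𝒰 x) + k := by
  classical
  refine Fintype.card_lt_card_add_of_forall_inter_nonempty fun S hS => ?_
  obtain ⟨i, hiS, hi⟩ := Set.mem_iUnion₂.1 (hcov S hS ▸ Set.mem_univ x)
  exact ⟨i, mem_inter.2 ⟨hiS, mem_colorsAt.2 hi⟩⟩

lemma mem_iUnion_thickening_or_mem_sUnion_cells (ht : 0 < t) {k : ℕ} {x : X}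
    (hx : Fintype.card ι < #(colorsAt 𝒰 x) + k) {T : Finset ι} (hT : #T + 1 = k) :
    x ∈ (⋃ i ∈ T, ⋃₀ (D.thickening t '' 𝒰 i)) ∪ ⋃₀ cells D t 𝒰 := by
  classical
  by_cases hcells : colorsAt (fun i => D.thickening t '' 𝒰 i) x ⊆ colorsAt 𝒰 x
  · exact Or.inr (mem_sUnion_cells hcells)
  have hlt := card_lt_card ((colorsAt_subset_colorsAt_thickening ht 𝒰 x).ssubset_of_not_subset
    hcells)
  obtain ⟨i, hi⟩ := inter_nonempty_of_card_lt_card_add_card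
    (subset_univ (colorsAt (fun i => D.thickening t '' 𝒰 i) x)) (subset_univ T)
    (by rw [card_univ]; omega)
  rw [mem_inter, mem_colorsAt] at hi
  exact Or.inl (Set.mem_biUnion hi.2 hi.1)

end Cells

end Kolmogorov

theorem stmt14_general {X : Type*} (D : DistSpace X) (k m : ℕ) (hkm : k ≤ m)
    (ε : ℝ≥0∞) (hε : 0 < ε)
    (𝒰 : Fin m → Set (Set X))
    (hsep : ∀ i, ε ≤ sep D (𝒰 i))
    (hcov : ∀ S : Finset (Fin m), S.card = k → (⋃ i ∈ S, ⋃₀ 𝒰 i) = Set.univ) :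
    ∃ 𝒱 : Fin (m + 1) → Set (Set X),
      (∀ i, ε / 3 ≤ sep D (𝒱 i)) ∧
      mesh D (⋃ i, 𝒱 i) ≤ mesh D (⋃ i, 𝒰 i) + 2 * ε / 3 ∧
      (∀ S : Finset (Fin (m + 1)), S.card = k → (⋃ i ∈ S, ⋃₀ 𝒱 i) = Set.univ) := by
  set t := ε / 3
  have ht : 0 < t := ENNReal.div_pos hε.ne' ENNReal.ofNat_ne_top
  have hthirds : t + t + t = ε := ENNReal.add_thirds ε
  refine ⟨Fin.snoc (fun i => D.thickening t '' 𝒰 i) (cells D t 𝒰),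
    Fin.forall_fin_succ'.2 ⟨fun i => ?_, ?_⟩, ?_, ?_⟩
  · simpa using DistSpace.le_sep_image_thickening (hthirds ▸ hsep i)
  · simpa using le_sep_cells fun i => le_add_self.trans (hthirds ▸ hsep i)
  · have hne (x : X) : (colorsAt (fun i => D.thickening t '' 𝒰 i) x).Nonempty := by
      have := lt_card_colorsAt_add hcov x
      rw [Fintype.card_fin] at this
      exact (Finset.card_pos.1 (by omega)).mono (colorsAt_subset_colorsAt_thickening ht 𝒰 x)
    rw [Set.iUnion_snoc, mesh_union, ← Set.image_iUnion, mul_div_assoc]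
    exact max_le (DistSpace.mesh_image_thickening_le t _) (le_self_add.trans' (mesh_cells_le hne))
  refine Fin.iUnion_eq_univ_of_forall_card_eq _ (fun T hT => ?_) (fun T hT => ?_)
  · simp only [Fin.snoc_castSucc]
    refine Set.eq_univ_of_univ_subset ((hcov T hT).symm.subset.trans (Set.iUnion₂_mono ?_))
    exact fun i _ => DistSpace.sUnion_subset_sUnion_image_thickening ht (𝒰 i)
  · simpa [Set.eq_univ_iff_forall] using
      fun x => mem_iUnion_thickening_or_mem_sUnion_cells ht (lt_card_colorsAt_add hcov x) hT

/-- Kolmogorov's trick: from a cover `𝒰 = ⋃_{i<m} 𝒰_i` with `sep(𝒰_i) ≥ ε` such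
that any `k` of the pieces already cover `X`, one obtains a cover indexed by
`m+1` with separation `≥ ε/3`, mesh increased by at most `2ε/3`, and any `k`
pieces covering `X`. -/
theorem stmt14 {X : Type*} (D : DistSpace X) (k m : ℕ) (hk : 0 < k) (hkm : k ≤ m)
    (ε : ℝ≥0∞) (hε : 0 < ε) (hεt : ε ≠ ∞)
    (𝒰 : Fin m → Set (Set X))
    (hsep : ∀ i, ε ≤ sep D (𝒰 i))
    (hcov : ∀ S : Finset (Fin m), S.card = k → (⋃ i ∈ S, ⋃₀ 𝒰 i) = Set.univ) :
    ∃ 𝒱 : Fin (m + 1) → Set (Set X),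
      (∀ i, ε / 3 ≤ sep D (𝒱 i)) ∧
      mesh D (⋃ i, 𝒱 i) ≤ mesh D (⋃ i, 𝒰 i) + 2 * ε / 3 ∧
      (∀ S : Finset (Fin (m + 1)), S.card = k → (⋃ i ∈ S, ⋃₀ 𝒱 i) = Set.univ) :=
  stmt14_general D k m hkm ε hε 𝒰 hsep hcov
end

section
/- Let F : Set → Set be the n-th power functor FX = X^n with Ff(α) = f ∘ α. For any distance space (X,d_X) and p ∈ [1,∞], the distance d^p_{FX} (the largest distance on X^n making every map X^n → X^n, f ↦ f∘a, non-expanding with respect to the ℓ^p-distance, for each a : n → n) satisfies d^∞_{X^n} ≤ d^p_{FX} ≤ d^p_{X^n} ≤ n^{1/p} · d^∞_{X^n}. In particular d^∞_{FX} = d^∞_{X^n}. -/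
open scoped ENNReal

/-- The `ℓ^p`-distance on `X^n`, `p ∈ [1,∞]`. -/
noncomputable def lpDist {X : Type*} (d : X → X → ℝ≥0∞) (p : ℝ≥0∞) {n : ℕ}
    (f g : Fin n → X) : ℝ≥0∞ :=
  if p = ∞ then ⨆ i, d (f i) (g i)
  else (∑ i, d (f i) (g i) ^ p.toReal) ^ (1 / p.toReal)

/-!
The sup distance `d^∞` is itself a distance on `X^n` for which every reindexing `f ↦ f ∘ a` is
non-expanding, even from `d^∞`; since `d^∞ ≤ d^p`, maximality of `d^p_{FX}` gives
`d^∞ ≤ d^p_{FX}`. Non-expansiveness of `ξ^id` gives `d^p_{FX} ≤ d^p`, and bounding each of the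
`n` summands of `d^p` by `(d^∞)^p` gives the last inequality.
-/

namespace lpDist

variable {X : Type*} {n : ℕ}

theorem top_eq (d : X → X → ℝ≥0∞) (f g : Fin n → X) :
    lpDist d ∞ f g = ⨆ i, d (f i) (g i) :=
  if_pos rfl

theorem of_ne_top (d : X → X → ℝ≥0∞) {p : ℝ≥0∞} (hp : p ≠ ∞) (f g : Fin n → X) :
    lpDist d p f g = (∑ i, d (f i) (g i) ^ p.toReal) ^ (1 / p.toReal) :=
  if_neg hp

theorem top_self (D : DistSpace X) (f : Fin n → X) : lpDist D.d ∞ f f = 0 := by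
  simp [top_eq, D.refl]

theorem top_comm (D : DistSpace X) (f g : Fin n → X) :
    lpDist D.d ∞ f g = lpDist D.d ∞ g f := by
  simp only [top_eq, D.symm]

theorem top_triangle (D : DistSpace X) (f g h : Fin n → X) :
    lpDist D.d ∞ f h ≤ lpDist D.d ∞ f g + lpDist D.d ∞ g h := by
  simp only [top_eq]
  exact iSup_le fun i => (D.triangle _ (g i) _).trans
    (add_le_add (le_iSup (fun i => D.d (f i) (g i)) i) (le_iSup (fun i => D.d (g i) (h i)) i))

theorem top_comp_le (d : X → X → ℝ≥0∞) {m : ℕ} (a : Fin m → Fin n) (f g : Fin n → X) :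
    lpDist d ∞ (f ∘ a) (g ∘ a) ≤ lpDist d ∞ f g := by
  simp only [top_eq, Function.comp_apply]
  exact iSup_le fun i => le_iSup (fun j => d (f j) (g j)) (a i)

theorem top_le (d : X → X → ℝ≥0∞) {p : ℝ≥0∞} (hp : p ≠ 0) (f g : Fin n → X) :
    lpDist d ∞ f g ≤ lpDist d p f g := by
  rcases eq_or_ne p ∞ with rfl | hp_top
  · exact le_rfl
  have hpr : 0 < p.toReal := ENNReal.toReal_pos hp hp_top
  rw [top_eq, of_ne_top d hp_top]
  refine iSup_le fun i => ?_
  have hsingle : d (f i) (g i) ^ p.toReal ≤ ∑ j, d (f j) (g j) ^ p.toReal :=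
    Finset.single_le_sum (f := fun j => d (f j) (g j) ^ p.toReal) (fun _ _ => zero_le)
      (Finset.mem_univ i)
  calc d (f i) (g i) = (d (f i) (g i) ^ p.toReal) ^ (1 / p.toReal) := by
        rw [← ENNReal.rpow_mul, mul_one_div_cancel hpr.ne', ENNReal.rpow_one]
    _ ≤ _ := ENNReal.rpow_le_rpow hsingle (by positivity)

theorem le_card_rpow_mul_top (d : X → X → ℝ≥0∞) {p : ℝ≥0∞} (hp : p ≠ 0) (f g : Fin n → X) :
    lpDist d p f g ≤ (n : ℝ≥0∞) ^ (1 / p.toReal) * lpDist d ∞ f g := by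
  rcases eq_or_ne p ∞ with rfl | hp_top
  · simp
  have hpr : 0 < p.toReal := ENNReal.toReal_pos hp hp_top
  rw [top_eq, of_ne_top d hp_top]
  set s := ⨆ i, d (f i) (g i)
  have hsum : ∑ i, d (f i) (g i) ^ p.toReal ≤ (n : ℝ≥0∞) * s ^ p.toReal :=
    calc ∑ i, d (f i) (g i) ^ p.toReal ≤ ∑ _i : Fin n, s ^ p.toReal :=
          Finset.sum_le_sum fun i _ =>
            ENNReal.rpow_le_rpow (le_iSup (fun j => d (f j) (g j)) i) hpr.le
      _ = (n : ℝ≥0∞) * s ^ p.toReal := by simp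
  calc (∑ i, d (f i) (g i) ^ p.toReal) ^ (1 / p.toReal)
      ≤ ((n : ℝ≥0∞) * s ^ p.toReal) ^ (1 / p.toReal) :=
        ENNReal.rpow_le_rpow hsum (by positivity)
    _ = (n : ℝ≥0∞) ^ (1 / p.toReal) * s := by
        rw [ENNReal.mul_rpow_of_nonneg _ _ (by positivity), ← ENNReal.rpow_mul,
          mul_one_div_cancel hpr.ne', ENNReal.rpow_one]

end lpDist

theorem stmt15_general {X : Type*} (D : DistSpace X) (n : ℕ) (p : ℝ≥0∞) (hp : 1 ≤ p)
    (dF : (Fin n → X) → (Fin n → X) → ℝ≥0∞)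
    (dF_ne : ∀ (a : Fin n → Fin n) (f g : Fin n → X),
      dF (f ∘ a) (g ∘ a) ≤ lpDist D.d p f g)
    (dF_max : ∀ ρ : (Fin n → X) → (Fin n → X) → ℝ≥0∞,
      (∀ f, ρ f f = 0) → (∀ f g, ρ f g = ρ g f) →
      (∀ f g h, ρ f h ≤ ρ f g + ρ g h) →
      (∀ (a : Fin n → Fin n) (f g : Fin n → X),
        ρ (f ∘ a) (g ∘ a) ≤ lpDist D.d p f g) →
      ∀ f g, ρ f g ≤ dF f g) :
    (∀ f g : Fin n → X,
      lpDist D.d ∞ f g ≤ dF f g ∧ dF f g ≤ lpDist D.d p f g ∧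
      lpDist D.d p f g ≤ (n : ℝ≥0∞) ^ (1 / p.toReal) * lpDist D.d ∞ f g) ∧
    (p = ∞ → ∀ f g : Fin n → X, dF f g = lpDist D.d ∞ f g) := by
  have hp0 : p ≠ 0 := (zero_lt_one.trans_le hp).ne'
  have top_le_dF : ∀ f g, lpDist D.d ∞ f g ≤ dF f g :=
    dF_max _ (lpDist.top_self D) (lpDist.top_comm D) (lpDist.top_triangle D)
      fun a f g => (lpDist.top_comp_le D.d a f g).trans (lpDist.top_le D.d hp0 f g)
  have dF_le : ∀ f g, dF f g ≤ lpDist D.d p f g := dF_ne id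
  refine ⟨fun f g => ⟨top_le_dF f g, dF_le f g, lpDist.le_card_rpow_mul_top D.d hp0 f g⟩, ?_⟩
  rintro rfl f g
  exact (dF_le f g).antisymm (top_le_dF f g)

/-- For the `n`-th power functor `FX = X^n`, the `ℓ^p`-metrization `d^p_{FX}`
(the largest distance on `X^n` making every map `f ↦ f ∘ a`, `a : n → n`,
non-expanding from `(X^n, d^p_{X^n})`) satisfies
`d^∞_{X^n} ≤ d^p_{FX} ≤ d^p_{X^n} ≤ n^{1/p} · d^∞_{X^n}`; in particular
`d^∞_{FX} = d^∞_{X^n}`. -/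
theorem stmt15 {X : Type*} (D : DistSpace X) (n : ℕ) (p : ℝ≥0∞) (hp : 1 ≤ p)
    (dF : (Fin n → X) → (Fin n → X) → ℝ≥0∞)
    (dF_refl : ∀ f, dF f f = 0)
    (dF_symm : ∀ f g, dF f g = dF g f)
    (dF_tri : ∀ f g h, dF f h ≤ dF f g + dF g h)
    (dF_ne : ∀ (a : Fin n → Fin n) (f g : Fin n → X),
      dF (f ∘ a) (g ∘ a) ≤ lpDist D.d p f g)
    (dF_max : ∀ ρ : (Fin n → X) → (Fin n → X) → ℝ≥0∞,
      (∀ f, ρ f f = 0) → (∀ f g, ρ f g = ρ g f) →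
      (∀ f g h, ρ f h ≤ ρ f g + ρ g h) →
      (∀ (a : Fin n → Fin n) (f g : Fin n → X),
        ρ (f ∘ a) (g ∘ a) ≤ lpDist D.d p f g) →
      ∀ f g, ρ f g ≤ dF f g) :
    (∀ f g : Fin n → X,
      lpDist D.d ∞ f g ≤ dF f g ∧ dF f g ≤ lpDist D.d p f g ∧
      lpDist D.d p f g ≤ (n : ℝ≥0∞) ^ (1 / p.toReal) * lpDist D.d ∞ f g) ∧
    (p = ∞ → ∀ f g : Fin n → X, dF f g = lpDist D.d ∞ f g) :=
  stmt15_general D n p hp dF dF_ne dF_max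
end

section
/- Let H be the hyperspace functor assigning to a set X the family of its finite subsets, and let (X,d_X) be a distance space. Then the ℓ^∞-metrization distance d^∞_{HX} on finite subsets of X coincides with the Hausdorff distance d_{HX}. -/
open scoped ENNReal

/-- The `ℓ^∞`-distance on `X^n`. -/
noncomputable def linfDist {X : Type*} (D : DistSpace X) {n : ℕ}
    (f g : Fin n → X) : ℝ≥0∞ :=
  ⨆ i, D.d (f i) (g i)

/-- The Hausdorff distance between finite subsets of a distance space. -/
noncomputable def hausDist {X : Type*} [DecidableEq X] (D : DistSpace X)
    (A B : Finset X) : ℝ≥0∞ :=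
  if A = B then 0
  else if A = ∅ ∨ B = ∅ then ∞
  else max (⨆ a ∈ A, ⨅ b ∈ B, D.d a b) (⨆ b ∈ B, ⨅ a ∈ A, D.d a b)

/-! The Hausdorff distance is itself one of the distances competing for `d^∞_{HX}`, so it is
below it. Conversely, pair each point of `A` with a nearest point of `B` and each point of `B`
with a nearest point of `A`: the resulting correspondence, enumerated as a pair of tuples, has the
two sets as its images and the Hausdorff distance as its `ℓ^∞`-length, so every distance for which
taking images is non-expanding is at most the Hausdorff distance. -/

lemma Finset.Nonempty.exists_mem_eq_biInf {ι α : Type*} [CompleteLinearOrder α] {s : Finset ι}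
    (hs : s.Nonempty) (f : ι → α) : ∃ i ∈ s, f i = ⨅ j ∈ s, f j := by
  obtain ⟨i, hi, h⟩ := s.exists_mem_eq_inf hs f
  exact ⟨i, hi, by rw [← Finset.inf_eq_iInf, h]⟩

namespace DistSpace

variable {X : Type*} (D : DistSpace X)

lemma linfDist_comm {n : ℕ} (f g : Fin n → X) : linfDist D f g = linfDist D g f := by
  simp only [linfDist, D.symm]

noncomputable def dirHausDist (A B : Finset X) : ℝ≥0∞ :=
  ⨆ a ∈ A, ⨅ b ∈ B, D.d a b

lemma dirHausDist_self (A : Finset X) : D.dirHausDist A A = 0 :=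
  nonpos_iff_eq_zero.mp <| iSup₂_le fun a ha => iInf₂_le_of_le a ha (D.refl a).le

lemma dirHausDist_empty_right {A : Finset X} (hA : A.Nonempty) : D.dirHausDist A ∅ = ⊤ := by
  obtain ⟨a, ha⟩ := hA
  exact top_unique (le_iSup₂_of_le a ha (by simp))

lemma dirHausDist_triangle (A B C : Finset X) :
    D.dirHausDist A C ≤ D.dirHausDist A B + D.dirHausDist B C := by
  refine iSup₂_le fun a ha => ?_
  calc (⨅ c ∈ C, D.d a c) ≤ (⨅ b ∈ B, D.d a b) + D.dirHausDist B C := by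
        simp only [ENNReal.iInf_add]
        refine le_iInf₂ fun b hb => ?_
        calc (⨅ c ∈ C, D.d a c) ≤ ⨅ c ∈ C, (D.d a b + D.d b c) :=
              iInf₂_mono fun c _ => D.triangle a b c
          _ = D.d a b + ⨅ c ∈ C, D.d b c := by simp only [ENNReal.add_iInf]
          _ ≤ D.d a b + D.dirHausDist B C := by
                gcongr; exact le_iSup₂ (f := fun b _ => ⨅ c ∈ C, D.d b c) b hb
    _ ≤ D.dirHausDist A B + D.dirHausDist B C := by
        gcongr; exact le_iSup₂ (f := fun a _ => ⨅ b ∈ B, D.d a b) a ha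

variable [DecidableEq X]

lemma dirHausDist_image_le_linfDist {n : ℕ} (a : Finset (Fin n)) (f g : Fin n → X) :
    D.dirHausDist (a.image f) (a.image g) ≤ linfDist D f g := by
  simp only [dirHausDist, Finset.iSup_finset_image]
  exact iSup₂_le fun i hi =>
    iInf₂_le_of_le (g i) (Finset.mem_image_of_mem g hi) (le_iSup (fun i => D.d (f i) (g i)) i)

/-- The definition's case split disappears: both directed distances vanish when `A = B`, and one
of them is `∞` when exactly one of the sets is empty. -/
lemma hausDist_eq_max (A B : Finset X) :
    hausDist D A B = max (D.dirHausDist A B) (D.dirHausDist B A) := by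
  unfold hausDist
  split_ifs with hAB hempty
  · simp [hAB, dirHausDist_self]
  · rcases hempty with rfl | rfl
    · simp [D.dirHausDist_empty_right (Finset.nonempty_iff_ne_empty.mpr (Ne.symm hAB))]
    · simp [D.dirHausDist_empty_right (Finset.nonempty_iff_ne_empty.mpr hAB)]
  · simp only [dirHausDist, D.symm]

lemma hausDist_self (A : Finset X) : hausDist D A A = 0 := by
  simp [hausDist]

lemma hausDist_comm (A B : Finset X) : hausDist D A B = hausDist D B A := by
  rw [hausDist_eq_max, hausDist_eq_max, max_comm]

lemma hausDist_triangle (A B C : Finset X) :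
    hausDist D A C ≤ hausDist D A B + hausDist D B C := by
  simp only [hausDist_eq_max]
  refine max_le ?_ ?_
  · exact (D.dirHausDist_triangle A B C).trans (add_le_add (le_max_left _ _) (le_max_left _ _))
  · calc D.dirHausDist C A ≤ D.dirHausDist C B + D.dirHausDist B A := D.dirHausDist_triangle C B A
      _ ≤ _ := by rw [add_comm]; exact add_le_add (le_max_right _ _) (le_max_right _ _)

def ImageNonexpanding (ρ : Finset X → Finset X → ℝ≥0∞) : Prop :=
  ∀ (n : ℕ) (a : Finset (Fin n)) (f g : Fin n → X), ρ (a.image f) (a.image g) ≤ linfDist D f g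

lemma imageNonexpanding_hausDist : D.ImageNonexpanding (hausDist D) := fun _ a f g => by
  rw [hausDist_eq_max]
  exact max_le (D.dirHausDist_image_le_linfDist a f g)
    ((D.dirHausDist_image_le_linfDist a g f).trans_eq (D.linfDist_comm g f))

variable {ρ : Finset X → Finset X → ℝ≥0∞} {D}

lemma ImageNonexpanding.image_le_biSup (hρ : D.ImageNonexpanding ρ) {ι : Type*} (s : Finset ι)
    (f g : ι → X) :
    ρ (s.image f) (s.image g) ≤ ⨆ i ∈ s, D.d (f i) (g i) := by
  let e := s.equivFin.symm
  have himage (h : ι → X) : Finset.univ.image (fun k => h (e k)) = s.image h := by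
    ext x
    simp [← e.surjective.exists (p := fun i : s => h i = x)]
  calc ρ (s.image f) (s.image g)
      ≤ linfDist D (fun k => f (e k)) (fun k => g (e k)) := himage f ▸ himage g ▸ hρ _ _ _ _
    _ = ⨆ i ∈ s, D.d (f i) (g i) := by
        rw [linfDist, e.iSup_comp (g := fun i : s => D.d (f i) (g i)), iSup_subtype']

lemma ImageNonexpanding.le_hausDist_of_nonempty (hρ : D.ImageNonexpanding ρ) {A B : Finset X}
    (hA : A.Nonempty) (hB : B.Nonempty) :
    ρ A B ≤ hausDist D A B := by
  choose φ hφB hφ using fun x => hB.exists_mem_eq_biInf (D.d x)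
  choose ψ hψA hψ using fun x => hA.exists_mem_eq_biInf (D.d x)
  let R := A.image (fun a => (a, φ a)) ∪ B.image (fun b => (ψ b, b))
  have hfst : R.image Prod.fst = A := by
    simpa [R, Finset.image_union, Finset.image_image, Function.comp_def] using
      Finset.image_subset_iff.mpr fun b _ => hψA b
  have hsnd : R.image Prod.snd = B := by
    simpa [R, Finset.image_union, Finset.image_image, Function.comp_def] using
      Finset.image_subset_iff.mpr fun a _ => hφB a
  calc ρ A B = ρ (R.image Prod.fst) (R.image Prod.snd) := by rw [hfst, hsnd]
    _ ≤ ⨆ p ∈ R, D.d p.1 p.2 := hρ.image_le_biSup R Prod.fst Prod.snd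
    _ = hausDist D A B := by
        simp only [R, Finset.iSup_union, Finset.iSup_finset_image, hausDist_eq_max, dirHausDist,
          D.symm (ψ _), hφ, hψ]

lemma ImageNonexpanding.le_hausDist (hρ : D.ImageNonexpanding ρ) (A B : Finset X) :
    ρ A B ≤ hausDist D A B := by
  rcases A.eq_empty_or_nonempty with rfl | hA <;> rcases B.eq_empty_or_nonempty with rfl | hB
  · rw [hausDist_self]
    simpa using hρ.image_le_biSup (∅ : Finset X) id id
  · simp [hausDist_eq_max, D.dirHausDist_empty_right hB]
  · simp [hausDist_eq_max, D.dirHausDist_empty_right hA]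
  · exact hρ.le_hausDist_of_nonempty hA hB

end DistSpace

theorem stmt16_general {X : Type*} [DecidableEq X] (D : DistSpace X)
    (dH : Finset X → Finset X → ℝ≥0∞)
    (h_ne : ∀ (n : ℕ) (a : Finset (Fin n)) (f g : Fin n → X),
      dH (a.image f) (a.image g) ≤ linfDist D f g)
    (h_max : ∀ ρ : Finset X → Finset X → ℝ≥0∞,
      (∀ A, ρ A A = 0) → (∀ A B, ρ A B = ρ B A) →
      (∀ A B C, ρ A C ≤ ρ A B + ρ B C) →
      (∀ (n : ℕ) (a : Finset (Fin n)) (f g : Fin n → X),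
        ρ (a.image f) (a.image g) ≤ linfDist D f g) →
      ∀ A B, ρ A B ≤ dH A B) :
    ∀ A B : Finset X, dH A B = hausDist D A B := fun A B =>
  le_antisymm (DistSpace.ImageNonexpanding.le_hausDist h_ne A B)
    (h_max _ D.hausDist_self D.hausDist_comm D.hausDist_triangle D.imageNonexpanding_hausDist A B)

/-- For the hyperspace functor `H` of finite subsets, the `ℓ^∞`-metrization
distance `d^∞_{HX}` (the largest distance on finite subsets making every map
`f ↦ f[a]`, `a ⊆ {0,…,n−1}`, non-expanding from `(X^n, d^∞_{X^n})`) coincides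
with the Hausdorff distance. -/
theorem stmt16 {X : Type*} [DecidableEq X] (D : DistSpace X)
    (dH : Finset X → Finset X → ℝ≥0∞)
    (h_refl : ∀ A, dH A A = 0)
    (h_symm : ∀ A B, dH A B = dH B A)
    (h_tri : ∀ A B C, dH A C ≤ dH A B + dH B C)
    (h_ne : ∀ (n : ℕ) (a : Finset (Fin n)) (f g : Fin n → X),
      dH (a.image f) (a.image g) ≤ linfDist D f g)
    (h_max : ∀ ρ : Finset X → Finset X → ℝ≥0∞,
      (∀ A, ρ A A = 0) → (∀ A B, ρ A B = ρ B A) →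
      (∀ A B C, ρ A C ≤ ρ A B + ρ B C) →
      (∀ (n : ℕ) (a : Finset (Fin n)) (f g : Fin n → X),
        ρ (a.image f) (a.image g) ≤ linfDist D f g) →
      ∀ A B, ρ A B ≤ dH A B) :
    ∀ A B : Finset X, dH A B = hausDist D A B :=
  stmt16_general D dH h_ne h_max
end

section
/- Let (X,d_X) be a distance space and a,b finite nonempty subsets of X with Hausdorff distance d_{HX}(a,b) < ∞, and let n ≥ max(|a|,|b|). Then there exist maps exhibiting d^∞ within factor 3: more precisely, there is a chain of three pairs of maps from finite index sets into X connecting a to b, witnessing d^∞_{H_nX}(a,b) ≤ 3 · d_{HX}(a,b), where H_nX is the set of subsets of X of cardinality at most n and d^∞_{H_nX} is the largest distance on H_nX making each map ξ^c : (X^n, d^∞_{X^n}) → H_nX, f ↦ f[c] (for c ⊆ {0,…,n−1}), non-expanding. Consequently d_{HX} ≤ d^∞_{H_nX} ≤ 3 · d_{HX} on H_nX. -/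
open scoped ENNReal

/-- The map `X^n → H_nX`, `f ↦ f[c]` for `c ⊆ {0,…,n−1}`; its image has
cardinality at most `n`. -/
def HnMap {X : Type*} [DecidableEq X] {n : ℕ} (c : Finset (Fin n)) (f : Fin n → X) :
    {s : Finset X // s.card ≤ n} :=
  ⟨c.image f, (Finset.card_image_le).trans (by simpa using Finset.card_le_univ c)⟩

/-!
The Hausdorff distance is itself a distance on `H_nX` for which every `ξ^c` is
non-expanding, so it lies below the largest one. Conversely, let `r = d_H(a, b)` and let
`β` send each point of `a` to a nearest point of `b`. Listing `a` as `f : Fin n → X`, the pair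
`(f, β ∘ f)` shows `d^∞(a, β[a]) ≤ r`. Every `y ∈ b` lies within `2r` of `β[a]`, through a
nearest point of `a`; moving the points of `b` outside `β[a]` there gives a pair showing
`d^∞(β[a], b) ≤ 2r`.
-/

section

open Finset

variable {X : Type*} (D : DistSpace X)

lemma linfDist_comm {n : ℕ} (f g : Fin n → X) : linfDist D f g = linfDist D g f := by
  simp only [linfDist, D.symm]

/-- The one-sided Hausdorff distance. -/
noncomputable def excess (A B : Finset X) : ℝ≥0∞ :=
  ⨆ x ∈ A, ⨅ y ∈ B, D.d x y

lemma iInf_le_excess {A : Finset X} (B : Finset X) {x : X} (hx : x ∈ A) :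
    ⨅ y ∈ B, D.d x y ≤ excess D A B :=
  le_iSup₂ (f := fun x _ => ⨅ y ∈ B, D.d x y) x hx

lemma excess_self (A : Finset X) : excess D A A = 0 :=
  le_zero_iff.1 <| iSup₂_le fun x hx => (iInf₂_le x hx).trans_eq (D.refl x)

lemma excess_triangle {A B C : Finset X} (hB : B.Nonempty) (hC : C.Nonempty) :
    excess D A C ≤ excess D A B + excess D B C := by
  refine iSup₂_le fun x hx => ?_
  obtain ⟨y, hyB, hy⟩ := B.exists_min_image (D.d x) hB
  obtain ⟨z, hzC, hz⟩ := C.exists_min_image (D.d y) hC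
  calc ⨅ w ∈ C, D.d x w ≤ D.d x z := iInf₂_le z hzC
    _ ≤ D.d x y + D.d y z := D.triangle x y z
    _ ≤ excess D A B + excess D B C :=
      add_le_add ((le_iInf₂ hy).trans (iInf_le_excess D B hx))
        ((le_iInf₂ hz).trans (iInf_le_excess D C hyB))

variable [DecidableEq X]

lemma excess_image_le_linfDist {n : ℕ} (c : Finset (Fin n)) (f g : Fin n → X) :
    excess D (c.image f) (c.image g) ≤ linfDist D f g := by
  refine iSup₂_le fun x hx => ?_
  obtain ⟨i, hi, rfl⟩ := mem_image.1 hx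
  exact (iInf₂_le (g i) (mem_image_of_mem g hi)).trans (le_iSup (fun j => D.d (f j) (g j)) i)

lemma hausDist_self (A : Finset X) : hausDist D A A = 0 := by
  simp [hausDist]

lemma hausDist_empty_left {B : Finset X} (hB : B.Nonempty) : hausDist D ∅ B = ∞ := by
  simp [hausDist, hB.ne_empty.symm]

lemma hausDist_empty_right {A : Finset X} (hA : A.Nonempty) : hausDist D A ∅ = ∞ := by
  simp [hausDist, hA.ne_empty]

lemma hausDist_eq_max {A B : Finset X} (hA : A.Nonempty) (hB : B.Nonempty) :
    hausDist D A B = max (excess D A B) (excess D B A) := by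
  by_cases hAB : A = B
  · subst hAB
    simp [hausDist_self, excess_self]
  simp only [hausDist, if_neg hAB, hA.ne_empty, hB.ne_empty, or_self, if_false, excess, D.symm]

lemma hausDist_comm (A B : Finset X) : hausDist D A B = hausDist D B A := by
  rcases A.eq_empty_or_nonempty with rfl | hA <;> rcases B.eq_empty_or_nonempty with rfl | hB
  · rfl
  · rw [hausDist_empty_left D hB, hausDist_empty_right D hB]
  · rw [hausDist_empty_left D hA, hausDist_empty_right D hA]
  · rw [hausDist_eq_max D hA hB, hausDist_eq_max D hB hA, max_comm]

lemma hausDist_triangle (A B C : Finset X) :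
    hausDist D A C ≤ hausDist D A B + hausDist D B C := by
  rcases A.eq_empty_or_nonempty with rfl | hA <;>
  rcases B.eq_empty_or_nonempty with rfl | hB <;>
  rcases C.eq_empty_or_nonempty with rfl | hC <;>
  try simp [hausDist_self, hausDist_empty_left, hausDist_empty_right, *]
  rw [hausDist_eq_max D hA hC, hausDist_eq_max D hA hB, hausDist_eq_max D hB hC]
  refine max_le ((excess_triangle D hB hC).trans (add_le_add le_sup_left le_sup_left)) ?_
  rw [add_comm]
  exact (excess_triangle D hB hA).trans (add_le_add le_sup_right le_sup_right)

lemma hausDist_image_le_linfDist {n : ℕ} (c : Finset (Fin n)) (f g : Fin n → X) :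
    hausDist D (c.image f) (c.image g) ≤ linfDist D f g := by
  rcases c.eq_empty_or_nonempty with rfl | hc
  · simp [hausDist_self]
  rw [hausDist_eq_max D (hc.image f) (hc.image g), linfDist_comm D f g]
  exact max_le ((excess_image_le_linfDist D c f g).trans_eq (linfDist_comm D f g))
    (excess_image_le_linfDist D c g f)

lemma exists_map_dist_le_hausDist {A B : Finset X} (hA : A.Nonempty) (hB : B.Nonempty) :
    ∃ β : X → X, ∀ x ∈ A, β x ∈ B ∧ D.d x (β x) ≤ hausDist D A B := by
  choose β hβB hβ using fun x => B.exists_min_image (D.d x) hB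
  refine ⟨β, fun x hx => ⟨hβB x, ?_⟩⟩
  calc D.d x (β x) ≤ ⨅ y ∈ B, D.d x y := le_iInf₂ (hβ x)
    _ ≤ excess D A B := iInf_le_excess D B hx
    _ ≤ hausDist D A B := (hausDist_eq_max D hA hB).symm ▸ le_max_left _ _

abbrev Hn (X : Type*) (n : ℕ) := {s : Finset X // s.card ≤ n}

variable {n : ℕ}

lemma exists_image_univ_eq {s : Finset X} (hs : s.Nonempty) (hn : s.card ≤ n) :
    ∃ f : Fin n → X, univ.image f = s := by
  obtain ⟨e⟩ : Nonempty (s ↪ Fin n) :=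
    Function.Embedding.nonempty_of_card_le (by simpa using hn)
  have : Nonempty s := hs.to_subtype
  refine ⟨fun i => (Function.invFun e i : s), Finset.ext fun x => ⟨?_, fun hx => ?_⟩⟩
  · intro hx
    obtain ⟨i, -, rfl⟩ := mem_image.1 hx
    exact (Function.invFun e i).2
  · exact mem_image.2 ⟨e ⟨x, hx⟩, mem_univ _,
      congrArg Subtype.val (Function.leftInverse_invFun e.injective ⟨x, hx⟩)⟩

def IsNonexpandingOnHn (ρ : Hn X n → Hn X n → ℝ≥0∞) : Prop :=
  ∀ (c : Finset (Fin n)) (f g : Fin n → X), ρ (HnMap c f) (HnMap c g) ≤ linfDist D f g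

namespace IsNonexpandingOnHn

variable {D} {ρ : Hn X n → Hn X n → ℝ≥0∞}

lemma flip (hρ : IsNonexpandingOnHn D ρ) : IsNonexpandingOnHn D (flip ρ) :=
  fun c f g => (hρ c g f).trans_eq (linfDist_comm D g f)

lemma le_of_image_eq (hρ : IsNonexpandingOnHn D ρ) {a b : Hn X n} (ha : a.1.Nonempty)
    {φ : X → X} (hb : b.1 = a.1.image φ) {r : ℝ≥0∞} (hφ : ∀ x ∈ a.1, D.d x (φ x) ≤ r) :
    ρ a b ≤ r := by
  obtain ⟨f, hf⟩ := exists_image_univ_eq ha a.2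
  have hfa : HnMap univ f = a := Subtype.ext hf
  have hfb : HnMap univ (φ ∘ f) = b := Subtype.ext <| by
    rw [hb, ← hf, image_image]
    rfl
  calc ρ a b = ρ (HnMap univ f) (HnMap univ (φ ∘ f)) := by rw [hfa, hfb]
    _ ≤ linfDist D f (φ ∘ f) := hρ _ _ _
    _ ≤ r := iSup_le fun i => hφ (f i) (hf ▸ mem_image_of_mem f (mem_univ i))

lemma le_three_mul_hausDist (hρ : IsNonexpandingOnHn D ρ)
    (h_tri : ∀ A B C, ρ A C ≤ ρ A B + ρ B C) {a b : Hn X n}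
    (ha : a.1.Nonempty) (hb : b.1.Nonempty) :
    ρ a b ≤ 3 * hausDist D a.1 b.1 := by
  set r := hausDist D a.1 b.1
  obtain ⟨β, hβ⟩ := exists_map_dist_le_hausDist D ha hb
  obtain ⟨α, hα⟩ := exists_map_dist_le_hausDist D hb ha
  rw [hausDist_comm] at hα
  let S : Hn X n := ⟨a.1.image β, card_image_le.trans a.2⟩
  let φ : X → X := fun y => if y ∈ S.1 then y else β (α y)
  have hφS : b.1.image φ = S.1 := by
    refine Subset.antisymm (fun z hz => ?_) (fun z hz => ?_)
    · obtain ⟨y, hy, rfl⟩ := mem_image.1 hz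
      by_cases hyS : y ∈ S.1
      · simp [φ, hyS]
      · simp only [φ, if_neg hyS]
        exact mem_image_of_mem β (hα y hy).1
    · obtain ⟨x, hx, rfl⟩ := mem_image.1 hz
      exact mem_image.2 ⟨β x, (hβ x hx).1, if_pos hz⟩
  have hφ : ∀ y ∈ b.1, D.d y (φ y) ≤ 2 * r := by
    intro y hy
    by_cases hyS : y ∈ S.1
    · simp [φ, hyS, D.refl]
    · calc D.d y (φ y) ≤ D.d y (α y) + D.d (α y) (β (α y)) := by
            simpa [φ, hyS] using D.triangle y (α y) (β (α y))
        _ ≤ r + r := add_le_add (hα y hy).2 (hβ (α y) (hα y hy).1).2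
        _ = 2 * r := (two_mul r).symm
  calc ρ a b ≤ ρ a S + ρ S b := h_tri a S b
    _ ≤ r + 2 * r := add_le_add (hρ.le_of_image_eq ha rfl fun x hx => (hβ x hx).2)
        (hρ.flip.le_of_image_eq hb hφS.symm hφ)
    _ = 3 * r := by ring

end IsNonexpandingOnHn

end

theorem stmt17_general {X : Type*} [DecidableEq X] (D : DistSpace X) (n : ℕ)
    (dHn : {s : Finset X // s.card ≤ n} → {s : Finset X // s.card ≤ n} → ℝ≥0∞)
    (h_refl : ∀ A, dHn A A = 0)
    (h_tri : ∀ A B C, dHn A C ≤ dHn A B + dHn B C)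
    (h_ne : ∀ (c : Finset (Fin n)) (f g : Fin n → X),
      dHn (HnMap c f) (HnMap c g) ≤ linfDist D f g)
    (h_max : ∀ ρ : {s : Finset X // s.card ≤ n} → {s : Finset X // s.card ≤ n} → ℝ≥0∞,
      (∀ A, ρ A A = 0) → (∀ A B, ρ A B = ρ B A) →
      (∀ A B C, ρ A C ≤ ρ A B + ρ B C) →
      (∀ (c : Finset (Fin n)) (f g : Fin n → X),
        ρ (HnMap c f) (HnMap c g) ≤ linfDist D f g) →
      ∀ A B, ρ A B ≤ dHn A B) :
    ∀ a b : {s : Finset X // s.card ≤ n},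
      hausDist D a.1 b.1 ≤ dHn a b ∧ dHn a b ≤ 3 * hausDist D a.1 b.1 := by
  intro a b
  refine ⟨h_max (fun A B => hausDist D A.1 B.1) (fun A => hausDist_self D A.1)
    (fun A B => hausDist_comm D A.1 B.1) (fun A B C => hausDist_triangle D A.1 B.1 C.1)
    (fun c f g => hausDist_image_le_linfDist D c f g) a b, ?_⟩
  rcases a.1.eq_empty_or_nonempty with ha | ha <;> rcases b.1.eq_empty_or_nonempty with hb | hb
  · simp [Subtype.ext (ha.trans hb.symm), h_refl]
  · simp [ha, hausDist_empty_left D hb]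
  · simp [hb, hausDist_empty_right D ha]
  · exact IsNonexpandingOnHn.le_three_mul_hausDist h_ne h_tri ha hb

/-- For the functor `H_n` of subsets of cardinality `≤ n`, the `ℓ^∞`-metrization
distance `d^∞_{H_nX}` satisfies `d_{HX} ≤ d^∞_{H_nX} ≤ 3·d_{HX}` on `H_nX`. -/
theorem stmt17 {X : Type*} [DecidableEq X] (D : DistSpace X) (n : ℕ)
    (dHn : {s : Finset X // s.card ≤ n} → {s : Finset X // s.card ≤ n} → ℝ≥0∞)
    (h_refl : ∀ A, dHn A A = 0)
    (h_symm : ∀ A B, dHn A B = dHn B A)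
    (h_tri : ∀ A B C, dHn A C ≤ dHn A B + dHn B C)
    (h_ne : ∀ (c : Finset (Fin n)) (f g : Fin n → X),
      dHn (HnMap c f) (HnMap c g) ≤ linfDist D f g)
    (h_max : ∀ ρ : {s : Finset X // s.card ≤ n} → {s : Finset X // s.card ≤ n} → ℝ≥0∞,
      (∀ A, ρ A A = 0) → (∀ A B, ρ A B = ρ B A) →
      (∀ A B C, ρ A C ≤ ρ A B + ρ B C) →
      (∀ (c : Finset (Fin n)) (f g : Fin n → X),
        ρ (HnMap c f) (HnMap c g) ≤ linfDist D f g) →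
      ∀ A B, ρ A B ≤ dHn A B) :
    ∀ a b : {s : Finset X // s.card ≤ n},
      hausDist D a.1 b.1 ≤ dHn a b ∧ dHn a b ≤ 3 * hausDist D a.1 b.1 :=
  stmt17_general D n dHn h_refl h_tri h_ne h_max
end

section
/- Let (X,d_X) be a distance space and let a,b be finite subsets of X. Define Γ(a,b) as the set of finite graphs Γ = (V,E) with vertex set V ⊆ X containing a ∪ b, such that every connected component of Γ meets both a and b; define the length ℓ(Γ) = Σ_{e∈E} diam(e) where diam(e) = max{d_X(x,y) : x,y ∈ e}. Then for any graph Γ ∈ Γ(a,b), the quantity inf{ℓ(Γ') : Γ' ∈ Γ(a,b)} is an upper bound for the distance d^1_{HX}(a,b); in fact d^1_{HX}(a,b) = inf({ℓ(Γ) : Γ ∈ Γ(a,b)} ∪ {∞}), and d_{HX}(a,b) ≤ d^1_{HX}(a,b). -/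
/-!
The graph infimum `graphDist` is itself a distance on finite sets for which every `f ↦ f[c]` is
non-expanding: the edges `{f i, g i}` form a graph joining `f[c]` to `g[c]`, and graphs compose by
union. Maximality of `d^1_{HX}` therefore gives `graphDist ≤ d^1_{HX}`.

Conversely, `d^1_{HX}(A, B) ≤ ℓ(Γ)` for every graph `Γ` linking `A` and `B`, by induction on the
number of edges. If `A` and `B` stay linked after deleting an edge `e = {s, t}`, induct. Otherwise,
up to swapping `A` and `B`, the component `W` of `s` in `Γ - e` meets `A` but not `B`; collapsing
`A ∩ W` onto `s` inside `W`, moving `s` across `e` to `t`, and linking the rest to `B` outside `W`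
costs at most `ℓ(W) + d(s, t) + ℓ(Γ - e - W) = ℓ(Γ)`. The same cut argument bounds the distance
between the ends of a path by the length of the graph, which bounds the Hausdorff distance.
-/

open scoped ENNReal

/-- The `ℓ^1`-distance on `X^n`. -/
noncomputable def l1Dist {X : Type*} (D : DistSpace X) {n : ℕ}
    (f g : Fin n → X) : ℝ≥0∞ :=
  ∑ i, D.d (f i) (g i)

/-- Reachability in a graph given by an edge set `E` (edges taken as
unordered, represented by pairs). -/
def Reach {X : Type*} (E : Finset (X × X)) : X → X → Prop :=
  Relation.ReflTransGen (fun u v => (u, v) ∈ E ∨ (v, u) ∈ E)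

open Finset

section

variable {X : Type*}

namespace Reach

variable {E E' : Finset (X × X)} {p q r x y : X}

theorem symm (h : Reach E x y) : Reach E y x := by
  induction h with
  | refl => exact .refl
  | tail _ hbc ih => exact .head hbc.symm ih

theorem mono (hE : E ⊆ E') (h : Reach E x y) : Reach E' x y :=
  Relation.ReflTransGen.mono (fun _ _ => Or.imp (@hE _) (@hE _)) _ _ h

theorem eq_of_empty (h : Reach (∅ : Finset (X × X)) x y) : x = y := by
  induction h with
  | refl => rfl
  | tail _ hbc _ => simp at hbc

theorem filter_of_closed {P : X → Prop} [DecidablePred P]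
    (hP : ∀ u v, ((u, v) ∈ E ∨ (v, u) ∈ E) → P u → P v) (h : Reach E x y) (hx : P x) :
    Reach (E.filter (P ·.1)) x y := by
  suffices Reach (E.filter (P ·.1)) x y ∧ P y from this.1
  induction h with
  | refl => exact ⟨.refl, hx⟩
  | tail _ hbc ih =>
    obtain ⟨hr, hb⟩ := ih
    refine ⟨hr.tail ?_, hP _ _ hbc hb⟩
    rcases hbc with hbc | hbc
    · exact .inl (mem_filter.2 ⟨hbc, hb⟩)
    · exact .inr (mem_filter.2 ⟨hbc, hP _ _ (.inr hbc) hb⟩)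

open scoped Classical in
theorem filter_reach (hr : Reach E r x) (h : Reach E x y) :
    Reach (E.filter (Reach E r ·.1)) x y :=
  h.filter_of_closed (fun _ _ huv hu => hu.tail huv) hr

open scoped Classical in
theorem filter_not_reach (hr : ¬Reach E r x) (h : Reach E x y) :
    Reach (E.filter (¬Reach E r ·.1)) x y :=
  h.filter_of_closed (P := (¬Reach E r ·)) (fun _ _ huv hu hv => hu (hv.tail huv.symm)) hr

variable [DecidableEq X] {e : X × X} {s t : X}

theorem erase_cases (hst : e = (s, t) ∨ e = (t, s)) (h : Reach E p q) :
    Reach (E.erase e) p q ∨ (Reach (E.erase e) p s ∧ Reach (E.erase e) t q) ∨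
      (Reach (E.erase e) p t ∧ Reach (E.erase e) s q) := by
  induction h with
  | refl => exact .inl .refl
  | @tail b c _ hbc ih =>
    by_cases he : (b, c) = e ∨ (c, b) = e
    · have hp : Reach (E.erase e) p s ∨ Reach (E.erase e) p t := by
        rcases ih with h | h | h <;> [skip; exact .inl h.1; exact .inr h.1]
        rcases hst with rfl | rfl <;> rcases he with he | he <;>
          simp only [Prod.mk.injEq] at he <;> rcases he with ⟨rfl, rfl⟩ <;> simp [h]
      have hc : c = s ∨ c = t := by
        rcases hst with rfl | rfl <;> rcases he with he | he <;>
          simp only [Prod.mk.injEq] at he <;> tauto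
      rcases hc with rfl | rfl <;> rcases hp with hp | hp
      · exact .inl hp
      · exact .inr (.inr ⟨hp, .refl⟩)
      · exact .inr (.inl ⟨hp, .refl⟩)
      · exact .inl hp
    · have hbc' : (b, c) ∈ E.erase e ∨ (c, b) ∈ E.erase e := by
        simp only [mem_erase]; tauto
      rcases ih with h | h | h
      · exact .inl (h.tail hbc')
      · exact .inr (.inl ⟨h.1, h.2.tail hbc'⟩)
      · exact .inr (.inr ⟨h.1, h.2.tail hbc'⟩)

theorem exists_cut (h : Reach E p q) (h' : ¬Reach (E.erase e) p q) :
    ∃ s t, (e = (s, t) ∨ e = (t, s)) ∧ Reach (E.erase e) p s ∧ Reach (E.erase e) t q := by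
  rcases h.erase_cases (s := e.1) (t := e.2) (.inl rfl) with h | ⟨hs, ht⟩ | ⟨ht, hs⟩
  · exact absurd h h'
  · exact ⟨_, _, .inl rfl, hs, ht⟩
  · exact ⟨_, _, .inr rfl, ht, hs⟩

end Reach

noncomputable def DistSpace.graphLength (D : DistSpace X) (E : Finset (X × X)) : ℝ≥0∞ :=
  ∑ e ∈ E, D.d e.1 e.2

theorem DistSpace.graphLength_mono (D : DistSpace X) {E E' : Finset (X × X)} (h : E ⊆ E') :
    D.graphLength E ≤ D.graphLength E' :=
  sum_le_sum_of_subset h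

open scoped Classical in
theorem DistSpace.graphLength_eq_cut [DecidableEq X] (D : DistSpace X) {E : Finset (X × X)}
    {e : X × X} (he : e ∈ E) {s t : X} (hst : e = (s, t) ∨ e = (t, s)) (r : X) :
    D.graphLength E =
      D.graphLength ((E.erase e).filter (Reach (E.erase e) r ·.1)) + D.d s t +
        D.graphLength ((E.erase e).filter (¬Reach (E.erase e) r ·.1)) := by
  have hd : D.d e.1 e.2 = D.d s t := by
    rcases hst with rfl | rfl
    exacts [rfl, D.symm _ _]
  rw [DistSpace.graphLength, ← add_sum_erase E _ he, ← sum_filter_add_sum_filter_not (E.erase e)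
    (Reach (E.erase e) r ·.1), hd]
  unfold DistSpace.graphLength
  ring

theorem DistSpace.d_le_graphLength [DecidableEq X] (D : DistSpace X) (E : Finset (X × X)) :
    ∀ {x y : X}, Reach E x y → D.d x y ≤ D.graphLength E := by
  classical
  induction E using Finset.strongInduction with
  | H E ih =>
  intro x y hxy
  rcases E.eq_empty_or_nonempty with rfl | ⟨e, he⟩
  · rw [hxy.eq_of_empty, D.refl]
    exact zero_le
  by_cases hxy' : Reach (E.erase e) x y
  · exact (ih _ (erase_ssubset he) hxy').trans (D.graphLength_mono (erase_subset _ _))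
  obtain ⟨s, t, hst, hxs, hty⟩ := hxy.exists_cut hxy'
  have hxt : ¬Reach (E.erase e) x t := fun h => hxy' (h.trans hty)
  have hsub : ∀ (P : X × X → Prop) [DecidablePred P], (E.erase e).filter P ⊂ E :=
    fun _ _ => (filter_subset _ _).trans_ssubset (erase_ssubset he)
  calc D.d x y ≤ D.d x s + D.d s y := D.triangle _ _ _
    _ ≤ D.d x s + (D.d s t + D.d t y) := by gcongr; exact D.triangle _ _ _
    _ ≤ D.graphLength ((E.erase e).filter (Reach (E.erase e) x ·.1)) + (D.d s t +
        D.graphLength ((E.erase e).filter (¬Reach (E.erase e) x ·.1))) := by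
      gcongr
      · exact ih _ (hsub _) (Reach.filter_reach .refl hxs)
      · exact ih _ (hsub _) (Reach.filter_not_reach hxt hty)
    _ = D.graphLength E := by rw [D.graphLength_eq_cut he hst x, add_assoc]

def Linked (E : Finset (X × X)) (A B : Finset X) : Prop :=
  (∀ x ∈ A, ∃ y ∈ B, Reach E x y) ∧ (∀ y ∈ B, ∃ x ∈ A, Reach E y x)

namespace Linked

variable {E : Finset (X × X)} {A B : Finset X}

theorem symm (h : Linked E A B) : Linked E B A :=
  ⟨h.2, h.1⟩

theorem eq_of_empty (h : Linked ∅ A B) : A = B := by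
  ext z
  constructor
  · intro hz
    obtain ⟨y, hy, hzy⟩ := h.1 z hz
    rwa [hzy.eq_of_empty]
  · intro hz
    obtain ⟨x, hx, hzx⟩ := h.2 z hz
    rwa [hzx.eq_of_empty]

theorem empty_iff (h : Linked E A B) : A = ∅ ↔ B = ∅ := by
  simp only [eq_empty_iff_forall_notMem]
  constructor
  · intro hA y hy
    obtain ⟨x, hx, -⟩ := h.2 y hy
    exact hA x hx
  · intro hB x hx
    obtain ⟨y, hy, -⟩ := h.1 x hx
    exact hB y hy

variable [DecidableEq X]

open scoped Classical in
theorem filter_reach_insert {s : X} (hs : ∃ x ∈ A, Reach E s x) :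
    Linked (E.filter (Reach E s ·.1)) A (insert s (A.filter (¬Reach E s ·))) := by
  refine ⟨fun x hx => ?_, fun y hy => ?_⟩
  · by_cases hsx : Reach E s x
    · exact ⟨s, mem_insert_self _ _, Reach.filter_reach hsx hsx.symm⟩
    · exact ⟨x, mem_insert_of_mem (mem_filter.2 ⟨hx, hsx⟩), .refl⟩
  · rcases mem_insert.1 hy with rfl | hy
    · obtain ⟨x, hx, hyx⟩ := hs
      exact ⟨x, hx, Reach.filter_reach .refl hyx⟩
    · exact ⟨y, (mem_filter.1 hy).1, .refl⟩

open scoped Classical in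
theorem erase_filter_not_reach_insert {e : X × X} {s t : X} (hst : e = (s, t) ∨ e = (t, s))
    (hAB : Linked E A B) (hsB : ∀ y ∈ B, ¬Reach (E.erase e) s y)
    (htB : ∃ y ∈ B, Reach (E.erase e) t y) :
    Linked ((E.erase e).filter (¬Reach (E.erase e) s ·.1))
      (insert t (A.filter (¬Reach (E.erase e) s ·))) B := by
  obtain ⟨y₀, hy₀, hty₀⟩ := htB
  have hst' : ¬Reach (E.erase e) s t := fun h => hsB y₀ hy₀ (h.trans hty₀)
  refine ⟨fun x hx => ?_, fun y hy => ?_⟩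
  · rcases mem_insert.1 hx with rfl | hx
    · exact ⟨y₀, hy₀, Reach.filter_not_reach hst' hty₀⟩
    obtain ⟨hxA, hsx⟩ := mem_filter.1 hx
    obtain ⟨y, hy, hxy⟩ := hAB.1 x hxA
    rcases hxy.erase_cases hst with h | ⟨hxs, -⟩ | ⟨-, hsy⟩
    · exact ⟨y, hy, Reach.filter_not_reach hsx h⟩
    · exact absurd hxs.symm hsx
    · exact absurd hsy (hsB y hy)
  · obtain ⟨x, hx, hyx⟩ := hAB.2 y hy
    rcases hyx.erase_cases hst with h | ⟨hys, -⟩ | ⟨hyt, -⟩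
    · refine ⟨x, mem_insert_of_mem (mem_filter.2 ⟨hx, fun hsx => ?_⟩), ?_⟩
      · exact hsB y hy (hsx.trans h.symm)
      · exact Reach.filter_not_reach (hsB y hy) h
    · exact absurd hys.symm (hsB y hy)
    · exact ⟨t, mem_insert_self _ _, Reach.filter_not_reach (hsB y hy) hyt⟩

end Linked

noncomputable def graphDist (D : DistSpace X) (A B : Finset X) : ℝ≥0∞ :=
  sInf {ℓ : ℝ≥0∞ | ∃ (V : Finset X) (E : Finset (X × X)),
    (∀ e ∈ E, e.1 ∈ V ∧ e.2 ∈ V) ∧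
    (↑A ∪ ↑B : Set X) ⊆ (V : Set X) ∧
    (∀ v ∈ V, (∃ x ∈ A, Reach E v x) ∧ (∃ y ∈ B, Reach E v y)) ∧
    ℓ = D.graphLength E}

theorem le_graphDist {D : DistSpace X} {A B : Finset X} {c : ℝ≥0∞}
    (h : ∀ E, Linked E A B → c ≤ D.graphLength E) : c ≤ graphDist D A B := by
  refine le_sInf ?_
  rintro _ ⟨V, E, -, hV, hcomp, rfl⟩
  exact h E ⟨fun x hx => (hcomp x (hV (.inl hx))).2, fun y hy => (hcomp y (hV (.inr hy))).1⟩

theorem graphDist_le_graphLength {D : DistSpace X} {A B V : Finset X} {E : Finset (X × X)}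
    (hE : ∀ e ∈ E, e.1 ∈ V ∧ e.2 ∈ V) (hV : (↑A ∪ ↑B : Set X) ⊆ (V : Set X))
    (hcomp : ∀ v ∈ V, (∃ x ∈ A, Reach E v x) ∧ (∃ y ∈ B, Reach E v y)) :
    graphDist D A B ≤ D.graphLength E :=
  sInf_le ⟨V, E, hE, hV, hcomp, rfl⟩

theorem graphDist_self (D : DistSpace X) (A : Finset X) : graphDist D A A = 0 := by
  refine nonpos_iff_eq_zero.1 <| (graphDist_le_graphLength (V := A) (E := ∅) (by simp) (by simp)
    fun v hv => ⟨⟨v, hv, .refl⟩, ⟨v, hv, .refl⟩⟩).trans_eq ?_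
  simp [DistSpace.graphLength]

theorem graphDist_le_comm (D : DistSpace X) (A B : Finset X) :
    graphDist D B A ≤ graphDist D A B := by
  refine le_sInf ?_
  rintro _ ⟨V, E, hE, hV, hcomp, rfl⟩
  exact sInf_le ⟨V, E, hE, Set.union_comm (B : Set X) A ▸ hV, fun v hv => (hcomp v hv).symm, rfl⟩

theorem graphDist_comm (D : DistSpace X) (A B : Finset X) :
    graphDist D A B = graphDist D B A :=
  le_antisymm (graphDist_le_comm D B A) (graphDist_le_comm D A B)

variable [DecidableEq X]

structure IsL1Admissible (D : DistSpace X) (ρ : Finset X → Finset X → ℝ≥0∞) : Prop where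
  refl : ∀ A, ρ A A = 0
  symm : ∀ A B, ρ A B = ρ B A
  triangle : ∀ A B C, ρ A C ≤ ρ A B + ρ B C
  image_le : ∀ (n : ℕ) (c : Finset (Fin n)) (f g : Fin n → X),
    ρ (c.image f) (c.image g) ≤ l1Dist D f g

namespace IsL1Admissible

variable {D : DistSpace X} {ρ : Finset X → Finset X → ℝ≥0∞} (hρ : IsL1Admissible D ρ)
include hρ

theorem image_le_sum {ι : Type*} (s : Finset ι) (f g : ι → X) :
    ρ (s.image f) (s.image g) ≤ ∑ i ∈ s, D.d (f i) (g i) := by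
  have hs : ∀ h : ι → X, univ.image (fun k => h (s.equivFin.symm k)) = s.image h := by
    intro h
    ext z
    simp only [mem_image, mem_univ, true_and]
    exact ⟨fun ⟨k, hk⟩ => ⟨_, (s.equivFin.symm k).2, hk⟩,
      fun ⟨i, hi, hz⟩ => ⟨s.equivFin ⟨i, hi⟩, by simpa using hz⟩⟩
  have := hρ.image_le _ univ (fun k => f (s.equivFin.symm k)) (fun k => g (s.equivFin.symm k))
  rwa [hs, hs, l1Dist, Equiv.sum_comp s.equivFin.symm (fun i => D.d (f i) (g i)),
    sum_coe_sort s (fun i => D.d (f i) (g i))] at this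

theorem insert_le (s t : X) (R : Finset X) : ρ (insert s R) (insert t R) ≤ D.d s t := by
  have hR : ∀ z : X, (insertNone R).image (·.getD z) = insert z R := by
    intro z
    ext w
    simp [insertNone]
  simpa [← hR, sum_insertNone, D.refl] using hρ.image_le_sum (insertNone R) (·.getD s) (·.getD t)

open scoped Classical in
theorem le_graphLength_of_cut {E : Finset (X × X)}
    (ih : ∀ F ⊂ E, ∀ {A B : Finset X}, Linked F A B → ρ A B ≤ D.graphLength F)
    {e : X × X} (he : e ∈ E) {s t : X} (hst : e = (s, t) ∨ e = (t, s)) {A B : Finset X}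
    (hAB : Linked E A B) (hsA : ∃ x ∈ A, Reach (E.erase e) s x)
    (hsB : ∀ y ∈ B, ¬Reach (E.erase e) s y) (htB : ∃ y ∈ B, Reach (E.erase e) t y) :
    ρ A B ≤ D.graphLength E := by
  set R := A.filter (¬Reach (E.erase e) s ·)
  have hsub : ∀ (P : X × X → Prop) [DecidablePred P], (E.erase e).filter P ⊂ E :=
    fun _ _ => (filter_subset _ _).trans_ssubset (erase_ssubset he)
  calc ρ A B ≤ ρ A (insert s R) + (ρ (insert s R) (insert t R) + ρ (insert t R) B) :=
        (hρ.triangle _ _ _).trans (by gcongr; exact hρ.triangle _ _ _)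
    _ ≤ D.graphLength ((E.erase e).filter (Reach (E.erase e) s ·.1)) + (D.d s t +
        D.graphLength ((E.erase e).filter (¬Reach (E.erase e) s ·.1))) := by
      gcongr
      · exact ih _ (hsub _) (Linked.filter_reach_insert hsA)
      · exact hρ.insert_le s t R
      · exact ih _ (hsub _) (Linked.erase_filter_not_reach_insert hst hAB hsB htB)
    _ = D.graphLength E := by rw [D.graphLength_eq_cut he hst s, add_assoc]

theorem le_graphLength_of_not_reach {E : Finset (X × X)}
    (ih : ∀ F ⊂ E, ∀ {A B : Finset X}, Linked F A B → ρ A B ≤ D.graphLength F)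
    {e : X × X} (he : e ∈ E) {A B : Finset X} (hAB : Linked E A B) {x : X} (hx : x ∈ A)
    (hxB : ∀ y ∈ B, ¬Reach (E.erase e) x y) :
    ρ A B ≤ D.graphLength E := by
  obtain ⟨y, hy, hxy⟩ := hAB.1 x hx
  obtain ⟨s, t, hst, hxs, hty⟩ := hxy.exists_cut (hxB y hy)
  exact hρ.le_graphLength_of_cut ih he hst hAB ⟨x, hx, hxs.symm⟩
    (fun z hz hsz => hxB z hz (hxs.trans hsz)) ⟨y, hy, hty⟩

theorem le_graphLength (E : Finset (X × X)) :
    ∀ {A B : Finset X}, Linked E A B → ρ A B ≤ D.graphLength E := by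
  induction E using Finset.strongInduction with
  | H E ih =>
  intro A B hAB
  rcases E.eq_empty_or_nonempty with rfl | ⟨e, he⟩
  · rw [hAB.eq_of_empty, hρ.refl]
    exact zero_le
  by_cases hAB' : Linked (E.erase e) A B
  · exact (ih _ (erase_ssubset he) hAB').trans (D.graphLength_mono (erase_subset _ _))
  rw [Linked, not_and_or] at hAB'
  push Not at hAB'
  rcases hAB' with ⟨x, hx, hxB⟩ | ⟨y, hy, hyA⟩
  · exact hρ.le_graphLength_of_not_reach ih he hAB hx hxB
  · rw [hρ.symm]
    exact hρ.le_graphLength_of_not_reach ih he hAB.symm hy hyA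

end IsL1Admissible

theorem graphDist_triangle (D : DistSpace X) (A B C : Finset X) :
    graphDist D A C ≤ graphDist D A B + graphDist D B C := by
  rw [graphDist, graphDist, graphDist, sInf_eq_iInf', sInf_eq_iInf', sInf_eq_iInf']
  refine ENNReal.le_iInf_add_iInf ?_
  rintro ⟨_, V₁, E₁, hE₁, hV₁, hc₁, rfl⟩ ⟨_, V₂, E₂, hE₂, hV₂, hc₂, rfl⟩
  refine (iInf_le _ ⟨_, V₁ ∪ V₂, E₁ ∪ E₂, ?_, ?_, ?_, rfl⟩).trans ?_
  · exact le_self_add.trans_eq (sum_union_inter (f := fun e : X × X => D.d e.1 e.2))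
  · intro e he
    rcases mem_union.1 he with he | he
    · exact ⟨mem_union_left _ (hE₁ e he).1, mem_union_left _ (hE₁ e he).2⟩
    · exact ⟨mem_union_right _ (hE₂ e he).1, mem_union_right _ (hE₂ e he).2⟩
  · rw [coe_union]
    exact Set.union_subset_union (Set.subset_union_left.trans hV₁)
      (Set.subset_union_right.trans hV₂)
  · intro v hv
    rcases mem_union.1 hv with hv | hv
    · obtain ⟨⟨x, hx, hvx⟩, ⟨y, hy, hvy⟩⟩ := hc₁ v hv
      obtain ⟨-, ⟨z, hz, hyz⟩⟩ := hc₂ y (hV₂ (.inl hy))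
      exact ⟨⟨x, hx, hvx.mono subset_union_left⟩,
        ⟨z, hz, (hvy.mono subset_union_left).trans (hyz.mono subset_union_right)⟩⟩
    · obtain ⟨⟨x, hx, hvx⟩, ⟨y, hy, hvy⟩⟩ := hc₂ v hv
      obtain ⟨⟨z, hz, hxz⟩, -⟩ := hc₁ x (hV₁ (.inr hx))
      exact ⟨⟨z, hz, (hvx.mono subset_union_right).trans (hxz.mono subset_union_left)⟩,
        ⟨y, hy, hvy.mono subset_union_right⟩⟩

theorem graphDist_image_le (D : DistSpace X) (n : ℕ) (c : Finset (Fin n)) (f g : Fin n → X) :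
    graphDist D (c.image f) (c.image g) ≤ l1Dist D f g := by
  refine (graphDist_le_graphLength (V := c.image f ∪ c.image g)
    (E := c.image fun i => (f i, g i)) ?_ ?_ ?_).trans ?_
  · intro e he
    obtain ⟨i, hi, rfl⟩ := mem_image.1 he
    exact ⟨mem_union_left _ (mem_image_of_mem f hi), mem_union_right _ (mem_image_of_mem g hi)⟩
  · rw [coe_union]
  · intro v hv
    have hedge : ∀ i ∈ c, Reach (c.image fun i => (f i, g i)) (f i) (g i) :=
      fun i hi => .single (.inl (mem_image_of_mem _ hi))
    rcases mem_union.1 hv with hv | hv <;> obtain ⟨i, hi, rfl⟩ := mem_image.1 hv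
    · exact ⟨⟨f i, mem_image_of_mem f hi, .refl⟩, ⟨g i, mem_image_of_mem g hi, hedge i hi⟩⟩
    · exact ⟨⟨f i, mem_image_of_mem f hi, (hedge i hi).symm⟩, ⟨g i, mem_image_of_mem g hi, .refl⟩⟩
  · exact sum_image_le_of_nonneg (fun _ _ => zero_le) |>.trans
      (sum_le_sum_of_subset (subset_univ c))

theorem isL1Admissible_graphDist (D : DistSpace X) : IsL1Admissible D (graphDist D) :=
  ⟨graphDist_self D, graphDist_comm D, graphDist_triangle D, graphDist_image_le D⟩

theorem hausDist_le_graphLength {D : DistSpace X} {E : Finset (X × X)} {A B : Finset X}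
    (hAB : Linked E A B) : hausDist D A B ≤ D.graphLength E := by
  unfold hausDist
  split_ifs with hAB' hempty
  · exact zero_le
  · rcases hempty with h | h
    · exact absurd (by rw [h, hAB.empty_iff.1 h]) hAB'
    · exact absurd (by rw [h, hAB.empty_iff.2 h]) hAB'
  refine max_le (iSup₂_le fun x hx => ?_) (iSup₂_le fun y hy => ?_)
  · obtain ⟨y, hy, hxy⟩ := hAB.1 x hx
    exact (iInf₂_le y hy).trans (D.d_le_graphLength E hxy)
  · obtain ⟨x, hx, hyx⟩ := hAB.2 y hy
    exact (iInf₂_le x hx).trans (D.symm x y ▸ D.d_le_graphLength E hyx)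

end

/-- Graph-theoretic description of `d^1_{HX}`: for finite subsets `a, b` of a
distance space, `d_{HX}(a,b) ≤ d^1_{HX}(a,b)` and `d^1_{HX}(a,b)` equals the
infimum of the lengths `ℓ(Γ) = Σ_{e∈E} diam(e)` over all graphs `Γ = (V,E)` in
`X` with `a ∪ b ⊆ V` such that every connected component of `Γ` meets both `a`
and `b` (`∞` if no such graph exists). -/
theorem stmt18 {X : Type*} [DecidableEq X] (D : DistSpace X)
    (dH1 : Finset X → Finset X → ℝ≥0∞)
    (h_refl : ∀ A, dH1 A A = 0)
    (h_symm : ∀ A B, dH1 A B = dH1 B A)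
    (h_tri : ∀ A B C, dH1 A C ≤ dH1 A B + dH1 B C)
    (h_ne : ∀ (n : ℕ) (c : Finset (Fin n)) (f g : Fin n → X),
      dH1 (c.image f) (c.image g) ≤ l1Dist D f g)
    (h_max : ∀ ρ : Finset X → Finset X → ℝ≥0∞,
      (∀ A, ρ A A = 0) → (∀ A B, ρ A B = ρ B A) →
      (∀ A B C, ρ A C ≤ ρ A B + ρ B C) →
      (∀ (n : ℕ) (c : Finset (Fin n)) (f g : Fin n → X),
        ρ (c.image f) (c.image g) ≤ l1Dist D f g) →
      ∀ A B, ρ A B ≤ dH1 A B)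
    (a b : Finset X) :
    hausDist D a b ≤ dH1 a b ∧
    dH1 a b = sInf {ℓ : ℝ≥0∞ | ∃ (V : Finset X) (E : Finset (X × X)),
      (∀ e ∈ E, e.1 ∈ V ∧ e.2 ∈ V) ∧
      (↑a ∪ ↑b : Set X) ⊆ (V : Set X) ∧
      (∀ v ∈ V, (∃ x ∈ a, Reach E v x) ∧ (∃ y ∈ b, Reach E v y)) ∧
      ℓ = ∑ e ∈ E, D.d e.1 e.2} := by
  have hρ : IsL1Admissible D dH1 := ⟨h_refl, h_symm, h_tri, h_ne⟩
  have hg := isL1Admissible_graphDist D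
  have heq : dH1 a b = graphDist D a b :=
    le_antisymm (le_graphDist fun E hE => hρ.le_graphLength E hE)
      (h_max _ hg.refl hg.symm hg.triangle hg.image_le a b)
  exact ⟨heq ▸ le_graphDist fun E hE => hausDist_le_graphLength hE, heq⟩
end

section
/- Let M be a two-element group, X a geodesic-enough space in the following sense: (X,d_X) is a Lipschitz-geodesic distance space (any two points at finite distance are joined by a Lipschitz path from [0,1]). Let F_0X be the group of finitely supported functions φ : X → M with Σ_{x∈X} φ(x) = 0, and for p > 1 define the norm ‖φ‖ as the infimum of Σ_i d^p-costs over all linking chains from φ to 0 (equivalently, d^p_{FX}(φ,0) for the ℓ^p-metrization of the functor of M-valued finitary functions). Then for every φ ∈ F_0X with Σ_{x∈E} φ(x) = 0 on every pseudometric component E of X, one has d^p_{FX}(φ,0) = 0. -/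
open scoped ENNReal NNReal Classical

/-- The map `ξ^a : X^n → F(X,M)` of the functor of `M`-valued finitary
functions: `f ↦ (y ↦ Σ_{f(i)=y} a(i))`. -/
noncomputable def pushFwd {X M : Type*} [AddCommMonoid M] {n : ℕ}
    (a : Fin n → M) (f : Fin n → X) : X →₀ M :=
  ∑ i, Finsupp.single (f i) (a i)

/-!
Moving a mass `c` from `x` to `y` along a Lipschitz path costs nothing. Subdivide the path into
`m` steps, put `c` at the first `m` subdivision points and keep `-c` at the same points as a fixed
background. Shifting the `m` masses one step forward simultaneously turns `single x c` into
`single y c`, at `ℓ^p`-cost at most `m^{1/p} · L/m`, which tends to `0` because `p > 1`.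
If the sum of `φ` over every pseudometric component vanishes, then `φ` is the finite sum of the
moves of each of its masses to a chosen representative of its component, and the triangle
inequality finishes the proof.
-/

open Filter Topology Finsupp

def DistSpace.LipschitzOnUnitInterval {X : Type*} (D : DistSpace X) (γ : ℝ → X) (L : ℝ≥0) :
    Prop :=
  ∀ s ∈ Set.Icc (0 : ℝ) 1, ∀ t ∈ Set.Icc (0 : ℝ) 1,
    D.d (γ s) (γ t) ≤ (L : ℝ≥0∞) * ENNReal.ofReal |s - t|

section PushFwd

variable {X M : Type*} [AddCommMonoid M]

lemma pushFwd_append {m n : ℕ} (a : Fin m → M) (b : Fin n → M) (f : Fin m → X)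
    (g : Fin n → X) :
    pushFwd (Fin.append a b) (Fin.append f g) = pushFwd a f + pushFwd b g := by
  simp [pushFwd, Fin.sum_univ_add]

lemma exists_pushFwd_eq (ψ : X →₀ M) :
    ∃ (n : ℕ) (a : Fin n → M) (f : Fin n → X), pushFwd a f = ψ := by
  induction ψ using Finsupp.induction with
  | zero => exact ⟨0, ![], ![], by simp [pushFwd]⟩
  | single_add x c ψ _ _ ih =>
    obtain ⟨n, a, f, rfl⟩ := ih
    exact ⟨n + 1, Fin.cons c a, Fin.cons x f, by simp [pushFwd, Fin.sum_univ_succ]⟩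

end PushFwd

section LpDist

variable {X : Type*} {p : ℝ≥0∞}

lemma lpDist_append_le (D : DistSpace X) (hp : p ≠ 0) {m n : ℕ} (f g : Fin m → X)
    (h : Fin n → X) :
    lpDist D.d p (Fin.append f h) (Fin.append g h) ≤ lpDist D.d p f g := by
  unfold lpDist
  split_ifs with hp_top
  · refine iSup_le fun i => ?_
    induction i using Fin.addCases with
    | left i => simpa using le_iSup (fun j => D.d (f j) (g j)) i
    | right i => simp [D.refl]
  · have hp_pos : 0 < p.toReal := ENNReal.toReal_pos hp hp_top
    refine ENNReal.rpow_le_rpow (le_of_eq ?_) (by positivity)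
    simp [Fin.sum_univ_add, D.refl, ENNReal.zero_rpow_of_pos hp_pos]

lemma lpDist_le_of_forall_le (d : X → X → ℝ≥0∞) (hp : p ≠ 0) {n : ℕ} {f g : Fin n → X}
    {δ : ℝ≥0∞} (h : ∀ i, d (f i) (g i) ≤ δ) :
    lpDist d p f g ≤ (n : ℝ≥0∞) ^ p.toReal⁻¹ * δ := by
  unfold lpDist
  split_ifs with hp_top
  · simpa [hp_top] using iSup_le h
  · have hp_pos : 0 < p.toReal := ENNReal.toReal_pos hp hp_top
    calc (∑ i, d (f i) (g i) ^ p.toReal) ^ (1 / p.toReal)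
        ≤ (∑ _i : Fin n, δ ^ p.toReal) ^ (1 / p.toReal) := by
          gcongr with i; exact h i
      _ = (n : ℝ≥0∞) ^ p.toReal⁻¹ * δ := by
          rw [Finset.sum_const, Finset.card_univ, Fintype.card_fin, nsmul_eq_mul, one_div,
            ENNReal.mul_rpow_of_nonneg _ _ (by positivity), ← ENNReal.rpow_mul,
            mul_inv_cancel₀ hp_pos.ne', ENNReal.rpow_one]

end LpDist

lemma DistSpace.d_succ_div_le {X : Type*} (D : DistSpace X) {γ : ℝ → X} {L : ℝ≥0}
    (hγ : D.LipschitzOnUnitInterval γ L)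
    {m j : ℕ} (hj : j < m) :
    D.d (γ ((j + 1 : ℕ) / m)) (γ (j / m)) ≤ L * (m : ℝ≥0∞)⁻¹ := by
  have hm : (0 : ℝ) < m := by exact_mod_cast (j.zero_le.trans_lt hj)
  have hmem : ∀ i : ℕ, i ≤ m → (i / m : ℝ) ∈ Set.Icc (0 : ℝ) 1 := fun i hi =>
    ⟨by positivity, (div_le_one hm).2 (by exact_mod_cast hi)⟩
  convert hγ _ (hmem _ hj) _ (hmem _ hj.le) using 2
  rw [← sub_div, Nat.cast_succ, add_sub_cancel_left, abs_of_pos (by positivity),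
    one_div, ENNReal.ofReal_inv_of_pos hm, ENNReal.ofReal_natCast]

lemma tendsto_natCast_rpow_mul_inv {q : ℝ} (hq : q < 1) :
    Tendsto (fun m : ℕ => (m : ℝ≥0∞) ^ q * (m : ℝ≥0∞)⁻¹) atTop (𝓝 0) := by
  have h : Tendsto (fun m : ℕ => ((m : ℝ≥0∞) ^ (1 - q))⁻¹) atTop (𝓝 0) := by
    simpa using tendsto_inv_iff.2
      ((ENNReal.tendsto_rpow_at_top (sub_pos.2 hq)).comp ENNReal.tendsto_nat_nhds_top)
  refine h.congr' ((eventually_ne_atTop 0).mono fun m hm => ?_)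
  rw [← ENNReal.rpow_neg, neg_sub,
    ENNReal.rpow_sub _ _ (by simpa using hm) (ENNReal.natCast_ne_top m), ENNReal.rpow_one,
    div_eq_mul_inv]

section Transport

variable {X M : Type*} [AddCommGroup M] (D : DistSpace X) {p : ℝ≥0∞}
  {dF : (X →₀ M) → (X →₀ M) → ℝ≥0∞}

lemma dist_add_pushFwd_le (hp : p ≠ 0)
    (h_ne : ∀ (n : ℕ) (a : Fin n → M) (f g : Fin n → X),
      dF (pushFwd a f) (pushFwd a g) ≤ lpDist D.d p f g)
    {n : ℕ} (a : Fin n → M) (f g : Fin n → X) (ψ : X →₀ M) :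
    dF (pushFwd a f + ψ) (pushFwd a g + ψ) ≤ lpDist D.d p f g := by
  obtain ⟨k, b, h, rfl⟩ := exists_pushFwd_eq ψ
  have h_append := (h_ne _ (Fin.append a b) _ _).trans (lpDist_append_le D hp f g h)
  rwa [pushFwd_append, pushFwd_append] at h_append

variable {γ : ℝ → X} {L : ℝ≥0}

lemma dist_add_single_sub_single_le
    (hγ : D.LipschitzOnUnitInterval γ L)
    (hp : p ≠ 0)
    (h_ne : ∀ (n : ℕ) (a : Fin n → M) (f g : Fin n → X),
      dF (pushFwd a f) (pushFwd a g) ≤ lpDist D.d p f g)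
    (c : M) (ψ : X →₀ M) {m : ℕ} (hm : m ≠ 0) :
    dF (single (γ 1) c - single (γ 0) c + ψ) ψ ≤
      (m : ℝ≥0∞) ^ p.toReal⁻¹ * (L * (m : ℝ≥0∞)⁻¹) := by
  set z : ℕ → X := fun j => γ (j / m)
  set a : Fin m → M := fun _ => c
  have htele : pushFwd a (fun j => z (j + 1)) - pushFwd a (fun j => z j)
      = single (γ 1) c - single (γ 0) c := by
    simp only [pushFwd, a, ← Finset.sum_sub_distrib]
    rw [Fin.sum_univ_eq_sum_range (fun j => single (z (j + 1)) c - single (z j) c),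
      Finset.sum_range_sub (fun j => single (z j) c)]
    simp [z, hm]
  calc dF (single (γ 1) c - single (γ 0) c + ψ) ψ
      = dF (pushFwd a (fun j => z (j + 1)) + (ψ - pushFwd a (fun j => z j)))
          (pushFwd a (fun j => z j) + (ψ - pushFwd a (fun j => z j))) := by
        rw [← htele]; congr 1 <;> abel
    _ ≤ lpDist D.d p (fun j : Fin m => z (j + 1)) (fun j => z j) :=
        dist_add_pushFwd_le D hp h_ne _ _ _ _
    _ ≤ _ := lpDist_le_of_forall_le D.d hp fun j => D.d_succ_div_le hγ j.isLt

lemma dist_add_single_sub_single_eq_zero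
    (hγ : D.LipschitzOnUnitInterval γ L)
    (hp : 1 < p)
    (h_ne : ∀ (n : ℕ) (a : Fin n → M) (f g : Fin n → X),
      dF (pushFwd a f) (pushFwd a g) ≤ lpDist D.d p f g)
    (c : M) (ψ : X →₀ M) :
    dF (single (γ 1) c - single (γ 0) c + ψ) ψ = 0 := by
  have hq : p.toReal⁻¹ < 1 := by
    rcases eq_or_ne p ∞ with rfl | hp_top
    · simp
    · exact inv_lt_one_of_one_lt₀
        (by simpa using (ENNReal.toReal_lt_toReal ENNReal.one_ne_top hp_top).2 hp)
  have hlim :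
      Tendsto (fun m : ℕ => (m : ℝ≥0∞) ^ p.toReal⁻¹ * (L * (m : ℝ≥0∞)⁻¹)) atTop (𝓝 0) := by
    simpa [mul_left_comm] using ENNReal.Tendsto.const_mul (tendsto_natCast_rpow_mul_inv hq)
      (Or.inr (ENNReal.coe_ne_top (r := L)))
  exact nonpos_iff_eq_zero.1 <| ge_of_tendsto hlim <| (eventually_ne_atTop 0).mono fun m hm =>
    dist_add_single_sub_single_le D hγ (zero_lt_one.trans hp).ne' h_ne c ψ hm

end Transport

lemma dist_sum_eq_zero {α ι : Type*} [AddCommMonoid α] {ρ : α → α → ℝ≥0∞}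
    (h_refl : ∀ a, ρ a a = 0) (h_tri : ∀ a b c, ρ a c ≤ ρ a b + ρ b c)
    (s : Finset ι) (t : ι → α) (ht : ∀ i ∈ s, ∀ a, ρ (t i + a) a = 0) :
    ρ (∑ i ∈ s, t i) 0 = 0 := by
  induction s using Finset.induction_on with
  | empty => exact h_refl 0
  | insert i s hi ih =>
    rw [Finset.sum_insert hi]
    refine nonpos_iff_eq_zero.1 ((h_tri _ (∑ j ∈ s, t j) _).trans ?_)
    rw [ht i (s.mem_insert_self i), ih fun j hj => ht j (Finset.mem_insert_of_mem hj), add_zero]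

def DistSpace.componentSetoid {X : Type*} (D : DistSpace X) : Setoid X where
  r x y := D.d x y ≠ ∞
  iseqv :=
    ⟨fun x => by simp [D.refl], fun h => by rwa [D.symm],
      fun hxy hyz => ne_top_of_le_ne_top (ENNReal.add_ne_top.2 ⟨hxy, hyz⟩) (D.triangle _ _ _)⟩

section Components

variable {X M : Type*} [AddCommGroup M] (D : DistSpace X) {φ : X →₀ M}

lemma mapDomain_mk_componentSetoid_eq_zero
    (hφ : ∀ z : X, ∑ x ∈ φ.support.filter (fun x => D.d z x ≠ ∞), φ x = 0) :
    mapDomain (Quotient.mk D.componentSetoid) φ = 0 := by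
  ext q
  induction q using Quotient.inductionOn with | h z => ?_
  rw [mapDomain, Finsupp.sum_apply, Finsupp.sum, Finsupp.zero_apply, ← hφ z, Finset.sum_filter]
  refine Finset.sum_congr rfl fun x _ => ?_
  rw [single_apply]
  exact if_congr (by rw [Quotient.eq, D.symm z x]; rfl) rfl rfl

lemma sum_single_sub_single_out_eq
    (hφ : ∀ z : X, ∑ x ∈ φ.support.filter (fun x => D.d z x ≠ ∞), φ x = 0) :
    (φ.sum fun x m => single x m - single (⟦x⟧ : Quotient D.componentSetoid).out m) = φ := by
  have h : (φ.sum fun x => single (⟦x⟧ : Quotient D.componentSetoid).out) = 0 := by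
    rw [← mapDomain, ← Function.comp_def, mapDomain_comp,
      mapDomain_mk_componentSetoid_eq_zero D hφ, mapDomain_zero]
  rw [Finsupp.sum_sub, sum_single, h, sub_zero]

end Components

theorem stmt19_general {X : Type*} (D : DistSpace X)
    (M : Type) [AddCommGroup M]
    (hgeo : ∀ x y : X, D.d x y ≠ ∞ → ∃ (γ : ℝ → X) (L : ℝ≥0),
      γ 0 = x ∧ γ 1 = y ∧ ∀ s ∈ Set.Icc (0 : ℝ) 1, ∀ t ∈ Set.Icc (0 : ℝ) 1,
        D.d (γ s) (γ t) ≤ (L : ℝ≥0∞) * ENNReal.ofReal |s - t|)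
    (p : ℝ≥0∞) (hp : 1 < p)
    (dF : (X →₀ M) → (X →₀ M) → ℝ≥0∞)
    (h_refl : ∀ φ, dF φ φ = 0)
    (h_tri : ∀ φ ψ χ, dF φ χ ≤ dF φ ψ + dF ψ χ)
    (h_ne : ∀ (n : ℕ) (a : Fin n → M) (f g : Fin n → X),
      dF (pushFwd a f) (pushFwd a g) ≤ lpDist D.d p f g)
    (φ : X →₀ M)
    (hφ : ∀ z : X, ∑ x ∈ φ.support.filter (fun x => D.d z x ≠ ∞), φ x = 0) :
    dF φ 0 = 0 := by
  rw [← sum_single_sub_single_out_eq D hφ, Finsupp.sum]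
  refine dist_sum_eq_zero h_refl h_tri _ _ fun x _ ψ => ?_
  obtain ⟨γ, L, hγ0, hγ1, hγ⟩ := hgeo _ x (Quotient.mk_out (s := D.componentSetoid) x)
  simpa [hγ0, hγ1] using dist_add_single_sub_single_eq_zero D hγ hp h_ne (φ x) ψ

/-- For a two-element group `M`, a Lipschitz-geodesic distance space `X`, and
`p > 1`: if `φ : X → M` is finitely supported with total sum `0` and with sum
`0` on each pseudometric component of `X`, then `d^p_{FX}(φ,0) = 0`, where
`d^p_{FX}` is the largest distance on `F(X,M)` making each map
`f ↦ ξ^a(f)` non-expanding from `(X^n, d^p_{X^n})`. -/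
theorem stmt19 {X : Type*} (D : DistSpace X)
    (M : Type) [AddCommGroup M] (hM : Nat.card M = 2)
    (hgeo : ∀ x y : X, D.d x y ≠ ∞ → ∃ (γ : ℝ → X) (L : ℝ≥0),
      γ 0 = x ∧ γ 1 = y ∧ ∀ s ∈ Set.Icc (0 : ℝ) 1, ∀ t ∈ Set.Icc (0 : ℝ) 1,
        D.d (γ s) (γ t) ≤ (L : ℝ≥0∞) * ENNReal.ofReal |s - t|)
    (p : ℝ≥0∞) (hp : 1 < p)
    (dF : (X →₀ M) → (X →₀ M) → ℝ≥0∞)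
    (h_refl : ∀ φ, dF φ φ = 0)
    (h_symm : ∀ φ ψ, dF φ ψ = dF ψ φ)
    (h_tri : ∀ φ ψ χ, dF φ χ ≤ dF φ ψ + dF ψ χ)
    (h_ne : ∀ (n : ℕ) (a : Fin n → M) (f g : Fin n → X),
      dF (pushFwd a f) (pushFwd a g) ≤ lpDist D.d p f g)
    (h_max : ∀ ρ : (X →₀ M) → (X →₀ M) → ℝ≥0∞,
      (∀ φ, ρ φ φ = 0) → (∀ φ ψ, ρ φ ψ = ρ ψ φ) →
      (∀ φ ψ χ, ρ φ χ ≤ ρ φ ψ + ρ ψ χ) →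
      (∀ (n : ℕ) (a : Fin n → M) (f g : Fin n → X),
        ρ (pushFwd a f) (pushFwd a g) ≤ lpDist D.d p f g) →
      ∀ φ ψ, ρ φ ψ ≤ dF φ ψ)
    (φ : X →₀ M)
    (hφ0 : ∑ x ∈ φ.support, φ x = 0)
    (hφ : ∀ z : X, ∑ x ∈ φ.support.filter (fun x => D.d z x ≠ ∞), φ x = 0) :
    dF φ 0 = 0 :=
  stmt19_general D M hgeo p hp dF h_refl h_tri h_ne φ hφ
end
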